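/- arXiv:2310.19319 — 11 statements merged into one kernel-verified Lean document; each statement's English description precedes it below -/
import Mathlib

section
/- Let K ≥ 2, let i⋆ ∈ {1,…,K}, let p : {1,…,K} → ℝ be strictly positive, and let σ : {1,…,K} → ℝ be strictly positive. For j ≠ i⋆ set h^j = (σ_{i⋆}²/p_{i⋆}) / (σ_{i⋆}²/p_{i⋆} + σ_j²/p_j). Then the stationarity condition p_{i⋆} = Σ_{j ≠ i⋆} h^j · p_j/(1 − h^j) holds if and only if the sum-of-squares balance condition p_{i⋆}²/σ_{i⋆}² = Σ_{j ≠ i⋆} p_j²/σ_j² holds. -/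
/-- For positive `p` and `σ`, with information-directed selection
probabilities `h^j = (σ_{i⋆}²/p_{i⋆}) / (σ_{i⋆}²/p_{i⋆} + σ_j²/p_j)`, the stationarity
condition `p_{i⋆} = Σ_{j ≠ i⋆} h^j · p_j/(1 − h^j)` holds iff the sum-of-squares balance
condition `p_{i⋆}²/σ_{i⋆}² = Σ_{j ≠ i⋆} p_j²/σ_j²` holds. -/
theorem stmt0 (K : ℕ) (hK : 2 ≤ K) (istar : Fin K)
    (p σ : Fin K → ℝ) (hp : ∀ i, 0 < p i) (hσ : ∀ i, 0 < σ i) :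
    (p istar = ∑ j ∈ Finset.univ.filter (· ≠ istar),
        ((σ istar ^ 2 / p istar) / (σ istar ^ 2 / p istar + σ j ^ 2 / p j)) *
          (p j / (1 - (σ istar ^ 2 / p istar) / (σ istar ^ 2 / p istar + σ j ^ 2 / p j)))) ↔
      p istar ^ 2 / σ istar ^ 2 =
        ∑ j ∈ Finset.univ.filter (· ≠ istar), p j ^ 2 / σ j ^ 2 := by
  have hps : 0 < p istar := hp istar
  have hss : 0 < σ istar ^ 2 := pow_pos (hσ istar) 2
  have key : ∀ j ∈ Finset.univ.filter (· ≠ istar),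
      ((σ istar ^ 2 / p istar) / (σ istar ^ 2 / p istar + σ j ^ 2 / p j)) *
          (p j / (1 - (σ istar ^ 2 / p istar) / (σ istar ^ 2 / p istar + σ j ^ 2 / p j)))
        = (σ istar ^ 2 / p istar) * (p j ^ 2 / σ j ^ 2) := by
    intro j _
    have hpj : 0 < p j := hp j
    have hsj : 0 < σ j ^ 2 := pow_pos (hσ j) 2
    have hsum : 0 < σ istar ^ 2 / p istar + σ j ^ 2 / p j := by positivity
    have h1 : 1 - (σ istar ^ 2 / p istar) / (σ istar ^ 2 / p istar + σ j ^ 2 / p j)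
        = (σ j ^ 2 / p j) / (σ istar ^ 2 / p istar + σ j ^ 2 / p j) := by
      field_simp
      ring
    rw [h1]
    field_simp
  rw [Finset.sum_congr rfl key, ← Finset.mul_sum]
  set S := ∑ j ∈ Finset.univ.filter (· ≠ istar), p j ^ 2 / σ j ^ 2 with hS
  rw [div_eq_iff hss.ne']
  constructor
  · intro h
    calc p istar ^ 2 = p istar * (σ istar ^ 2 / p istar * S) := by rw [← h]; ring
      _ = S * σ istar ^ 2 := by field_simp
  · intro h
    rw [div_mul_eq_mul_div, eq_div_iff hps.ne']
    linear_combination h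
end

section
/- Let K ≥ 2, let i⋆ ∈ {1,…,K}, let σ : {1,…,K} → ℝ be strictly positive, and let p : {1,…,K} → ℝ be strictly positive with Σ_{i=1}^K p_i = 1. For j ≠ i⋆ set h^j = (σ_{i⋆}²/p_{i⋆})/(σ_{i⋆}²/p_{i⋆} + σ_j²/p_j) and μ_j = p_j/(1 − h^j). If the sum-of-squares balance condition p_{i⋆}²/σ_{i⋆}² = Σ_{j ≠ i⋆} p_j²/σ_j² holds, then μ_j > 0 for every j ≠ i⋆ and Σ_{j ≠ i⋆} μ_j = 1, i.e., (μ_j)_{j ≠ i⋆} is a probability vector. -/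
/-!
Writing `a = σ_{i⋆}²/p_{i⋆}` and `b_j = σ_j²/p_j`, one has `1 - h^j = b_j/(a + b_j)`, hence
`μ_j = p_j + a p_j/b_j = p_j + a · p_j²/σ_j²`. Each `μ_j` is thus positive, and summing over
`j ≠ i⋆`, the balance condition turns `a · Σ_j p_j²/σ_j²` into `a · p_{i⋆}²/σ_{i⋆}² = p_{i⋆}`,
which together with `Σ_{j ≠ i⋆} p_j = 1 - p_{i⋆}` gives `Σ_j μ_j = 1`.
-/

theorem div_one_sub_div_add_eq {𝕜 : Type*} [Field 𝕜] (x : 𝕜) {a b : 𝕜} (hb : b ≠ 0)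
    (hab : a + b ≠ 0) : x / (1 - a / (a + b)) = x + a * x / b := by
  rw [one_sub_div hab, add_sub_cancel_left]
  field_simp
  ring

theorem div_one_sub_selection_prob_eq {s t q r : ℝ} (hs : 0 < s) (ht : 0 < t) (hq : 0 < q)
    (hr : 0 < r) :
    q / (1 - (s ^ 2 / t) / (s ^ 2 / t + r ^ 2 / q)) = q + s ^ 2 / t * (q ^ 2 / r ^ 2) := by
  have hb : 0 < r ^ 2 / q := by positivity
  have ha : 0 < s ^ 2 / t := by positivity
  rw [div_one_sub_div_add_eq q hb.ne' (add_pos ha hb).ne']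
  field_simp

theorem Finset.sum_filter_ne_eq_sub {ι M : Type*} [Fintype ι] [DecidableEq ι] [AddCommGroup M]
    (f : ι → M) (i : ι) : ∑ j ∈ univ.filter (· ≠ i), f j = ∑ j, f j - f i := by
  rw [filter_ne', sum_erase_eq_sub (mem_univ i)]

theorem stmt1_general (K : ℕ) (istar : Fin K)
    (σ p : Fin K → ℝ) (hσ : ∀ i, 0 < σ i) (hp : ∀ i, 0 < p i)
    (hsum : ∑ i, p i = 1)
    (hbal : p istar ^ 2 / σ istar ^ 2 =
      ∑ j ∈ Finset.univ.filter (· ≠ istar), p j ^ 2 / σ j ^ 2) :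
    (∀ j, j ≠ istar →
      0 < p j / (1 - (σ istar ^ 2 / p istar) / (σ istar ^ 2 / p istar + σ j ^ 2 / p j))) ∧
    ∑ j ∈ Finset.univ.filter (· ≠ istar),
        p j / (1 - (σ istar ^ 2 / p istar) / (σ istar ^ 2 / p istar + σ j ^ 2 / p j)) = 1 := by
  have hμ (j : Fin K) :=
    div_one_sub_selection_prob_eq (hσ istar) (hp istar) (hp j) (hσ j)
  refine ⟨fun j _ => ?_, ?_⟩
  · rw [hμ j]
    exact add_pos (hp j) (mul_pos (div_pos (pow_pos (hσ istar) 2) (hp istar))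
      (div_pos (pow_pos (hp j) 2) (pow_pos (hσ j) 2)))
  · have hpi := (hp istar).ne'
    have hσi := (hσ istar).ne'
    rw [Finset.sum_congr rfl fun j _ => hμ j, Finset.sum_add_distrib, ← Finset.mul_sum, ← hbal,
      Finset.sum_filter_ne_eq_sub, hsum]
    field_simp
    ring

/-- If the sum-of-squares balance condition holds for a strictly positive
allocation `p` in the probability simplex, then the dual weights
`μ_j = p_j/(1 − h^j)` (with `h^j = (σ_{i⋆}²/p_{i⋆})/(σ_{i⋆}²/p_{i⋆} + σ_j²/p_j)`)
form a probability vector over `j ≠ i⋆`. -/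
theorem stmt1 (K : ℕ) (hK : 2 ≤ K) (istar : Fin K)
    (σ p : Fin K → ℝ) (hσ : ∀ i, 0 < σ i) (hp : ∀ i, 0 < p i)
    (hsum : ∑ i, p i = 1)
    (hbal : p istar ^ 2 / σ istar ^ 2 =
      ∑ j ∈ Finset.univ.filter (· ≠ istar), p j ^ 2 / σ j ^ 2) :
    (∀ j, j ≠ istar →
      0 < p j / (1 - (σ istar ^ 2 / p istar) / (σ istar ^ 2 / p istar + σ j ^ 2 / p j))) ∧
    ∑ j ∈ Finset.univ.filter (· ≠ istar),
        p j / (1 - (σ istar ^ 2 / p istar) / (σ istar ^ 2 / p istar + σ j ^ 2 / p j)) = 1 :=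
  stmt1_general K istar σ p hσ hp hsum hbal
end

section
/- Let K ≥ 2, let θ : {1,…,K} → ℝ have a unique best arm I* (i.e., θ_{I*} > θ_j for all j ≠ I*), and let σ : {1,…,K} → ℝ be strictly positive. Then: (a) the function p ↦ min_{j ≠ I*} C_j(p) attains its maximum over the probability simplex S_K at a unique point p*; (b) p* is component-wise strictly positive; and (c) p* is the unique component-wise strictly positive vector in S_K satisfying both the information balance condition C_i(p*) = C_j(p*) for all i, j ≠ I* and the sum-of-squares balance condition (p*_{I*})²/σ_{I*}² = Σ_{j ≠ I*} (p*_j)²/σ_j². -/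
/-!
For `j ≠ I*`, `C_j` is a concave, positively homogeneous function of `(p_{I*}, p_j)`, so it lies
below each of its tangent planes at an interior point `q`, strictly so off the ray through `q`.

A maximiser of `min_j C_j` over the simplex exists by compactness and is interior, since `C_j`
vanishes where `p_{I*} = 0` or `p_j = 0`. At an interior maximiser no direction of total mass
zero can increase all active `C_j` to first order. Shifting mass away from an inactive arm shows
that all `C_j` are active, and if the ratios `w_j` of the two partial derivatives of `C_j` did
not sum to `1` (the sum-of-squares condition), one could solve for a direction raising every
`C_j` at once.

Conversely, at a balanced interior point `q` the tangent planes, divided by `∂C_j/∂p_j`, sum to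
`∑ p = 1` on the simplex. So a `p` with `min_j C_j(p) ≥ min_j C_j(q)` must lie on every tangent
plane, and hence equals `q`.
-/

open Filter Topology Set

noncomputable section

-- At `x₀ = x₁ = 0` the division by zero returns `0`, which is the convention `C_j = 0`.
def gaussChernoff (Δ v₀ v₁ x₀ x₁ : ℝ) : ℝ :=
  Δ ^ 2 * x₀ * x₁ / (2 * (v₀ * x₁ + v₁ * x₀))

-- The differential of `gaussChernoff Δ v₀ v₁` at `(y₀, y₁)`, evaluated at `(u₀, u₁)`.
def gaussChernoffDeriv (Δ v₀ v₁ y₀ y₁ u₀ u₁ : ℝ) : ℝ :=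
  Δ ^ 2 * (v₀ * y₁ ^ 2 * u₀ + v₁ * y₀ ^ 2 * u₁) / (2 * (v₀ * y₁ + v₁ * y₀) ^ 2)

section GaussChernoff

variable {Δ v₀ v₁ x₀ x₁ y₀ y₁ u₀ u₁ : ℝ}

lemma gaussChernoff_nonneg (hv₀ : 0 ≤ v₀) (hv₁ : 0 ≤ v₁) (hx₀ : 0 ≤ x₀) (hx₁ : 0 ≤ x₁) :
    0 ≤ gaussChernoff Δ v₀ v₁ x₀ x₁ := by
  unfold gaussChernoff; positivity

lemma gaussChernoff_pos (hΔ : Δ ≠ 0) (hv₀ : 0 < v₀) (hv₁ : 0 < v₁) (hx₀ : 0 < x₀)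
    (hx₁ : 0 < x₁) : 0 < gaussChernoff Δ v₀ v₁ x₀ x₁ := by
  unfold gaussChernoff; positivity

@[simp] lemma gaussChernoff_zero_left : gaussChernoff Δ v₀ v₁ 0 x₁ = 0 := by
  simp [gaussChernoff]

@[simp] lemma gaussChernoff_zero_right : gaussChernoff Δ v₀ v₁ x₀ 0 = 0 := by
  simp [gaussChernoff]

lemma gaussChernoff_le_div (hv₀ : 0 < v₀) (hv₁ : 0 ≤ v₁) (hx₀ : 0 ≤ x₀) (hx₁ : 0 ≤ x₁) :
    gaussChernoff Δ v₀ v₁ x₀ x₁ ≤ Δ ^ 2 * x₀ / (2 * v₀) := by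
  unfold gaussChernoff
  rcases (by positivity : 0 ≤ v₀ * x₁ + v₁ * x₀).eq_or_lt with hD | hD
  · rw [← hD, mul_zero, div_zero]; positivity
  · rw [div_le_div_iff₀ (by positivity) (by positivity)]
    have : 0 ≤ Δ ^ 2 * x₀ * v₁ * x₀ := by positivity
    nlinarith

lemma continuousOn_gaussChernoff (hv₀ : 0 < v₀) (hv₁ : 0 < v₁) :
    ContinuousOn (fun x : ℝ × ℝ => gaussChernoff Δ v₀ v₁ x.1 x.2) (Ici 0 ×ˢ Ici 0) := by
  rintro ⟨a, b⟩ ⟨ha, hb⟩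
  simp only [mem_Ici] at ha hb
  by_cases hab : a = 0 ∧ b = 0
  · obtain ⟨rfl, rfl⟩ := hab
    have hbound : Tendsto (fun x : ℝ × ℝ => Δ ^ 2 * x.1 / (2 * v₀)) (𝓝[Ici 0 ×ˢ Ici 0] (0, 0))
        (𝓝 0) := by
      simpa using ((by fun_prop : Continuous fun x : ℝ × ℝ => Δ ^ 2 * x.1 / (2 * v₀)).tendsto
        (0, 0)).mono_left nhdsWithin_le_nhds
    refine tendsto_of_tendsto_of_tendsto_of_le_of_le' (by simpa using tendsto_const_nhds)
      (by simpa using hbound) ?_ ?_ <;>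
      filter_upwards [self_mem_nhdsWithin] with x ⟨hx₀, hx₁⟩
    · exact gaussChernoff_nonneg hv₀.le hv₁.le hx₀ hx₁
    · exact gaussChernoff_le_div hv₀ hv₁.le hx₀ hx₁
  · have hD : 2 * (v₀ * b + v₁ * a) ≠ 0 := by
      intro h0
      apply hab
      constructor <;> nlinarith [mul_nonneg hv₀.le hb, mul_nonneg hv₁.le ha]
    refine ContinuousAt.continuousWithinAt ?_
    unfold gaussChernoff
    exact ContinuousAt.div (by fun_prop) (by fun_prop) hD

lemma gaussChernoffDeriv_sub_gaussChernoff (hy : v₀ * y₁ + v₁ * y₀ ≠ 0)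
    (hu : v₀ * u₁ + v₁ * u₀ ≠ 0) :
    gaussChernoffDeriv Δ v₀ v₁ y₀ y₁ u₀ u₁ - gaussChernoff Δ v₀ v₁ u₀ u₁ =
      Δ ^ 2 * v₀ * v₁ * (y₁ * u₀ - y₀ * u₁) ^ 2 /
        (2 * (v₀ * y₁ + v₁ * y₀) ^ 2 * (v₀ * u₁ + v₁ * u₀)) := by
  unfold gaussChernoffDeriv gaussChernoff
  rw [div_sub_div _ _ (by positivity) (by positivity),
    div_eq_div_iff (by positivity) (by positivity)]
  ring

lemma gaussChernoff_le_deriv (hv₀ : 0 < v₀) (hv₁ : 0 < v₁) (hy₀ : 0 < y₀) (hy₁ : 0 < y₁)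
    (hu₀ : 0 ≤ u₀) (hu₁ : 0 ≤ u₁) :
    gaussChernoff Δ v₀ v₁ u₀ u₁ ≤ gaussChernoffDeriv Δ v₀ v₁ y₀ y₁ u₀ u₁ := by
  rcases (by positivity : 0 ≤ v₀ * u₁ + v₁ * u₀).eq_or_lt with hu | hu
  · rw [gaussChernoff, ← hu, mul_zero, div_zero, gaussChernoffDeriv]
    positivity
  · have := gaussChernoffDeriv_sub_gaussChernoff (Δ := Δ) (by positivity : v₀ * y₁ + v₁ * y₀ ≠ 0)
      hu.ne'
    have : 0 ≤ Δ ^ 2 * v₀ * v₁ * (y₁ * u₀ - y₀ * u₁) ^ 2 /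
        (2 * (v₀ * y₁ + v₁ * y₀) ^ 2 * (v₀ * u₁ + v₁ * u₀)) := by positivity
    linarith

lemma gaussChernoff_lt_deriv (hΔ : Δ ≠ 0) (hv₀ : 0 < v₀) (hv₁ : 0 < v₁) (hy₀ : 0 < y₀)
    (hy₁ : 0 < y₁) (hu₀ : 0 ≤ u₀) (hu₁ : 0 ≤ u₁) (hne : y₁ * u₀ ≠ y₀ * u₁) :
    gaussChernoff Δ v₀ v₁ u₀ u₁ < gaussChernoffDeriv Δ v₀ v₁ y₀ y₁ u₀ u₁ := by
  have hu : 0 < v₀ * u₁ + v₁ * u₀ := by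
    by_contra! h
    apply hne
    rw [show u₀ = 0 by nlinarith, show u₁ = 0 by nlinarith, mul_zero, mul_zero]
  have := gaussChernoffDeriv_sub_gaussChernoff (Δ := Δ) (by positivity : v₀ * y₁ + v₁ * y₀ ≠ 0)
    hu.ne'
  have : y₁ * u₀ - y₀ * u₁ ≠ 0 := sub_ne_zero.2 hne
  have : 0 < Δ ^ 2 * v₀ * v₁ * (y₁ * u₀ - y₀ * u₁) ^ 2 /
      (2 * (v₀ * y₁ + v₁ * y₀) ^ 2 * (v₀ * u₁ + v₁ * u₀)) := by positivity
  linarith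

lemma gaussChernoffDeriv_self :
    gaussChernoffDeriv Δ v₀ v₁ y₀ y₁ y₀ y₁ = gaussChernoff Δ v₀ v₁ y₀ y₁ := by
  unfold gaussChernoffDeriv gaussChernoff
  field_simp

lemma gaussChernoffDeriv_eq_mul (hv₁ : v₁ ≠ 0) (hy₀ : y₀ ≠ 0) :
    gaussChernoffDeriv Δ v₀ v₁ y₀ y₁ u₀ u₁ =
      gaussChernoffDeriv Δ v₀ v₁ y₀ y₁ 0 1 * (v₀ * y₁ ^ 2 / (v₁ * y₀ ^ 2) * u₀ + u₁) := by
  unfold gaussChernoffDeriv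
  field_simp
  ring

lemma gaussChernoffDeriv_pos (hΔ : Δ ≠ 0) (hv₀ : 0 < v₀) (hv₁ : 0 < v₁) (hy₀ : 0 < y₀)
    (hy₁ : 0 < y₁) (hu₀ : 0 ≤ u₀) (hu₁ : 0 < u₁) :
    0 < gaussChernoffDeriv Δ v₀ v₁ y₀ y₁ u₀ u₁ := by
  unfold gaussChernoffDeriv; positivity

lemma hasDerivAt_gaussChernoff_line (hy : v₀ * y₁ + v₁ * y₀ ≠ 0) :
    HasDerivAt (fun t => gaussChernoff Δ v₀ v₁ (y₀ + t * u₀) (y₁ + t * u₁))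
      (gaussChernoffDeriv Δ v₀ v₁ y₀ y₁ u₀ u₁) 0 := by
  have h₀ : HasDerivAt (fun t : ℝ => y₀ + t * u₀) u₀ 0 := by
    simpa using ((hasDerivAt_id (0 : ℝ)).mul_const u₀).const_add y₀
  have h₁ : HasDerivAt (fun t : ℝ => y₁ + t * u₁) u₁ 0 := by
    simpa using ((hasDerivAt_id (0 : ℝ)).mul_const u₁).const_add y₁
  refine (((h₀.const_mul (Δ ^ 2)).fun_mul h₁).fun_div
    (((h₁.const_mul v₀).fun_add (h₀.const_mul v₁)).const_mul 2)
    (by simpa using hy)).congr_deriv ?_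
  unfold gaussChernoffDeriv
  field_simp
  ring

end GaussChernoff

lemma eventually_lt_of_hasDerivAt {f : ℝ → ℝ} {f' m : ℝ} (hf : HasDerivAt f f' 0)
    (hm : m ≤ f 0) (hf' : f 0 = m → 0 < f') : ∀ᶠ t in 𝓝[>] 0, m < f t := by
  rcases hm.lt_or_eq with hm | hm
  · exact (hf.continuousAt.eventually (lt_mem_nhds hm)).filter_mono nhdsWithin_le_nhds
  · filter_upwards [hf.tendsto_slope_zero_right.eventually (lt_mem_nhds (hf' hm.symm)),
      self_mem_nhdsWithin] with t hslope (ht : 0 < t)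
    rw [zero_add, smul_eq_mul, ← hm] at hslope
    linarith [(mul_pos_iff_of_pos_left (inv_pos.2 ht)).1 hslope]

instance {α : Type*} [Nontrivial α] (a : α) : Nonempty {b // b ≠ a} :=
  nonempty_subtype.2 (exists_ne a)

section Simplex

variable {ι : Type*} [Fintype ι] {p q v : ι → ℝ}

lemma eventually_add_smul_mem_stdSimplex (hq : q ∈ stdSimplex ℝ ι) (hqpos : ∀ i, 0 < q i)
    (hv : ∑ i, v i = 0) : ∀ᶠ t in 𝓝 (0 : ℝ), q + t • v ∈ stdSimplex ℝ ι := by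
  have hpos : ∀ᶠ t in 𝓝 (0 : ℝ), ∀ i, 0 < q i + t * v i := by
    refine eventually_all.2 fun i => ?_
    exact (by fun_prop : Continuous fun t : ℝ => q i + t * v i).continuousAt.eventually
      (lt_mem_nhds (by simpa using hqpos i))
  filter_upwards [hpos] with t ht
  refine ⟨fun i => (ht i).le, ?_⟩
  simp [Finset.sum_add_distrib, ← Finset.mul_sum, hq.2, hv]

lemma sum_eq_add_sum_filter_ne {M : Type*} [AddCommMonoid M] [DecidableEq ι] (f : ι → M)
    (k : ι) : ∑ i, f i = f k + ∑ i ∈ Finset.univ.filter (· ≠ k), f i := by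
  rw [Finset.filter_ne', Finset.add_sum_erase _ _ (Finset.mem_univ k)]

lemma eq_of_mem_stdSimplex_of_mul_eq_mul {k : ι} (hp : p ∈ stdSimplex ℝ ι)
    (hq : q ∈ stdSimplex ℝ ι) (hqk : q k ≠ 0) (hpq : ∀ i, q i * p k = q k * p i) : p = q := by
  have hk : p k = q k := by
    simpa [← Finset.sum_mul, ← Finset.mul_sum, hp.2, hq.2] using
      (Finset.sum_congr rfl fun i _ => hpq i : ∑ i, q i * p k = ∑ i, q k * p i)
  funext i
  exact mul_left_cancel₀ hqk (by rw [← hpq i, hk, mul_comm])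

end Simplex

section Bandit

variable {ι : Type*} (θ σ : ι → ℝ) (I : ι)

def chernoffInfo (j : ι) (p : ι → ℝ) : ℝ :=
  gaussChernoff (θ I - θ j) (σ I ^ 2) (σ j ^ 2) (p I) (p j)

def minChernoff (p : ι → ℝ) : ℝ :=
  ⨅ j : {j // j ≠ I}, chernoffInfo θ σ I j p

-- The ratio `(∂C_j/∂p_{I*}) / (∂C_j/∂p_j)` at `q`; the sum-of-squares balance condition says that
-- these ratios sum to `1`.
def balanceWeight (q : ι → ℝ) (j : ι) : ℝ :=
  σ I ^ 2 * q j ^ 2 / (σ j ^ 2 * q I ^ 2)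

-- `∂C_j/∂p_j` at `q`.
def chernoffInfoSlope (j : ι) (q : ι → ℝ) : ℝ :=
  gaussChernoffDeriv (θ I - θ j) (σ I ^ 2) (σ j ^ 2) (q I) (q j) 0 1

variable {θ σ I} {j : ι} {p q : ι → ℝ}

lemma chernoffInfoSlope_pos (hθ : θ j ≠ θ I) (hσ : ∀ i, σ i ≠ 0) (hq : ∀ i, 0 < q i) :
    0 < chernoffInfoSlope θ σ I j q :=
  gaussChernoffDeriv_pos (sub_ne_zero.2 hθ.symm) (pow_two_pos_of_ne_zero (hσ I))
    (pow_two_pos_of_ne_zero (hσ j)) (hq I) (hq j) le_rfl one_pos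

lemma hasDerivAt_chernoffInfo_line (hσ : ∀ i, σ i ≠ 0) (hq : ∀ i, 0 < q i) (v : ι → ℝ) :
    HasDerivAt (fun t : ℝ => chernoffInfo θ σ I j (q + t • v))
      (chernoffInfoSlope θ σ I j q * (balanceWeight σ I q j * v I + v j)) 0 := by
  have := hasDerivAt_gaussChernoff_line (Δ := θ I - θ j) (u₀ := v I) (u₁ := v j)
    (add_pos (mul_pos (pow_two_pos_of_ne_zero (hσ I)) (hq j))
      (mul_pos (pow_two_pos_of_ne_zero (hσ j)) (hq I))).ne'
  rw [gaussChernoffDeriv_eq_mul (pow_ne_zero 2 (hσ j)) (hq I).ne'] at this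
  exact this

lemma chernoffInfo_le_add (hσ : ∀ i, σ i ≠ 0) (hq : ∀ i, 0 < q i) (hp : ∀ i, 0 ≤ p i) :
    chernoffInfo θ σ I j p ≤ chernoffInfo θ σ I j q +
      chernoffInfoSlope θ σ I j q * (balanceWeight σ I q j * (p I - q I) + (p j - q j)) := by
  have hle := gaussChernoff_le_deriv (Δ := θ I - θ j) (pow_two_pos_of_ne_zero (hσ I))
    (pow_two_pos_of_ne_zero (hσ j)) (hq I) (hq j) (hp I) (hp j)
  have hself := gaussChernoffDeriv_self (Δ := θ I - θ j) (v₀ := σ I ^ 2) (v₁ := σ j ^ 2)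
    (y₀ := q I) (y₁ := q j)
  rw [gaussChernoffDeriv_eq_mul (pow_ne_zero 2 (hσ j)) (hq I).ne'] at hle hself
  unfold chernoffInfo chernoffInfoSlope balanceWeight
  linarith

lemma chernoffInfo_lt_add (hθ : θ j ≠ θ I) (hσ : ∀ i, σ i ≠ 0) (hq : ∀ i, 0 < q i)
    (hp : ∀ i, 0 ≤ p i) (hpq : q j * p I ≠ q I * p j) :
    chernoffInfo θ σ I j p < chernoffInfo θ σ I j q +
      chernoffInfoSlope θ σ I j q * (balanceWeight σ I q j * (p I - q I) + (p j - q j)) := by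
  have hlt := gaussChernoff_lt_deriv (sub_ne_zero.2 hθ.symm) (pow_two_pos_of_ne_zero (hσ I))
    (pow_two_pos_of_ne_zero (hσ j)) (hq I) (hq j) (hp I) (hp j) hpq
  have hself := gaussChernoffDeriv_self (Δ := θ I - θ j) (v₀ := σ I ^ 2) (v₁ := σ j ^ 2)
    (y₀ := q I) (y₁ := q j)
  rw [gaussChernoffDeriv_eq_mul (pow_ne_zero 2 (hσ j)) (hq I).ne'] at hlt hself
  unfold chernoffInfo chernoffInfoSlope balanceWeight
  linarith

variable [Fintype ι]

lemma sum_balanceWeight_eq_one_iff [DecidableEq ι] (hσ : σ I ≠ 0) (hq : q I ≠ 0) :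
    ∑ j ∈ Finset.univ.filter (· ≠ I), balanceWeight σ I q j = 1 ↔
      q I ^ 2 / σ I ^ 2 = ∑ j ∈ Finset.univ.filter (· ≠ I), q j ^ 2 / σ j ^ 2 := by
  have hsum : ∑ j ∈ Finset.univ.filter (· ≠ I), balanceWeight σ I q j =
      σ I ^ 2 / q I ^ 2 * ∑ j ∈ Finset.univ.filter (· ≠ I), q j ^ 2 / σ j ^ 2 := by
    rw [Finset.mul_sum]
    refine Finset.sum_congr rfl fun j _ => ?_
    rw [balanceWeight, div_mul_div_comm, mul_comm (q I ^ 2)]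
  rw [hsum]
  constructor <;> intro h <;> field_simp at h ⊢ <;> linarith

lemma minChernoff_le (p : ι → ℝ) (hj : j ≠ I) :
    minChernoff θ σ I p ≤ chernoffInfo θ σ I j p :=
  ciInf_le (f := fun j : {j // j ≠ I} => chernoffInfo θ σ I j p) (Set.finite_range _).bddBelow
    ⟨j, hj⟩

variable [Nontrivial ι]

lemma exists_chernoffInfo_eq_minChernoff (p : ι → ℝ) :
    ∃ j ≠ I, chernoffInfo θ σ I j p = minChernoff θ σ I p := by
  obtain ⟨⟨j, hj⟩, h⟩ :=
    exists_eq_ciInf_of_finite (f := fun j : {j // j ≠ I} => chernoffInfo θ σ I j p)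
  exact ⟨j, hj, h⟩

lemma minChernoff_pos (hθ : ∀ j ≠ I, θ j ≠ θ I) (hσ : ∀ i, σ i ≠ 0)
    (hp : ∀ i, 0 < p i) : 0 < minChernoff θ σ I p := by
  obtain ⟨j, hj, hjp⟩ := exists_chernoffInfo_eq_minChernoff (θ := θ) (σ := σ) p
  rw [← hjp]
  exact gaussChernoff_pos (sub_ne_zero.2 (hθ j hj).symm) (pow_two_pos_of_ne_zero (hσ I))
    (pow_two_pos_of_ne_zero (hσ j)) (hp I) (hp j)

lemma minChernoff_nonpos_of_eq_zero {i : ι} (hp : p i = 0) : minChernoff θ σ I p ≤ 0 := by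
  by_cases hi : i = I
  · subst hi
    obtain ⟨j, hj⟩ := exists_ne i
    simpa [chernoffInfo, hp] using minChernoff_le (θ := θ) (σ := σ) p hj
  · simpa [chernoffInfo, hp] using minChernoff_le (θ := θ) (σ := σ) p hi

lemma continuousOn_minChernoff (hσ : ∀ i, σ i ≠ 0) :
    ContinuousOn (minChernoff θ σ I) (stdSimplex ℝ ι) := by
  classical
  have hC : ∀ j, ContinuousOn (chernoffInfo θ σ I j) (stdSimplex ℝ ι) := fun j =>
    (continuousOn_gaussChernoff (pow_two_pos_of_ne_zero (hσ I))
      (pow_two_pos_of_ne_zero (hσ j))).comp (f := fun p : ι → ℝ => (p I, p j)) (by fun_prop)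
      fun p hp => ⟨hp.1 I, hp.1 j⟩
  have hinf : minChernoff θ σ I = fun p => Finset.univ.inf' Finset.univ_nonempty
      fun j : {j // j ≠ I} => chernoffInfo θ σ I j p :=
    funext fun p => (Finset.inf'_univ_eq_ciInf _).symm
  rw [hinf]
  exact ContinuousOn.finset_inf'_apply _ fun j _ => hC j

lemma exists_isMaxOn_minChernoff (hσ : ∀ i, σ i ≠ 0) :
    ∃ p ∈ stdSimplex ℝ ι, IsMaxOn (minChernoff θ σ I) (stdSimplex ℝ ι) p :=
  (isCompact_stdSimplex ℝ ι).exists_isMaxOn ⟨_, (stdSimplex.barycenter (𝕜 := ℝ) (X := ι)).2⟩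
    (continuousOn_minChernoff hσ)

lemma IsMaxOn.pos_of_minChernoff (hθ : ∀ j ≠ I, θ j ≠ θ I)
    (hσ : ∀ i, σ i ≠ 0) (hq : q ∈ stdSimplex ℝ ι)
    (hmax : IsMaxOn (minChernoff θ σ I) (stdSimplex ℝ ι) q) (i : ι) : 0 < q i := by
  have hbary := (stdSimplex.barycenter (𝕜 := ℝ) (X := ι)).2
  have hpos : 0 < minChernoff θ σ I q :=
    (minChernoff_pos hθ hσ fun _ => by simp [stdSimplex.barycenter, Fintype.card_pos]).trans_le
      (hmax hbary)
  exact (hq.1 i).lt_of_ne fun hqi => (minChernoff_nonpos_of_eq_zero hqi.symm).not_gt hpos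

lemma IsMaxOn.exists_chernoffInfo_eq_and_nonpos (hθ : ∀ j ≠ I, θ j ≠ θ I)
    (hσ : ∀ i, σ i ≠ 0) (hq : q ∈ stdSimplex ℝ ι)
    (hmax : IsMaxOn (minChernoff θ σ I) (stdSimplex ℝ ι) q) {v : ι → ℝ} (hv : ∑ i, v i = 0) :
    ∃ j ≠ I, chernoffInfo θ σ I j q = minChernoff θ σ I q ∧
      balanceWeight σ I q j * v I + v j ≤ 0 := by
  have hqpos := hmax.pos_of_minChernoff hθ hσ hq
  by_contra! h
  have hC : ∀ᶠ t : ℝ in 𝓝[>] 0, ∀ j : {j // j ≠ I},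
      minChernoff θ σ I q < chernoffInfo θ σ I j (q + t • v) := by
    refine eventually_all.2 fun ⟨j, hj⟩ =>
      eventually_lt_of_hasDerivAt (hasDerivAt_chernoffInfo_line hσ hqpos v) ?_ fun h0 => ?_
    · simpa using minChernoff_le q hj
    · exact mul_pos (chernoffInfoSlope_pos (hθ j hj) hσ hqpos) (h j hj (by simpa using h0))
  obtain ⟨t, htS, htC⟩ := (((eventually_add_smul_mem_stdSimplex hq hqpos hv).filter_mono
    nhdsWithin_le_nhds).and hC).exists
  obtain ⟨j, hj, hjt⟩ :=
    exists_chernoffInfo_eq_minChernoff (θ := θ) (σ := σ) (I := I) (q + t • v)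
  exact (hmax htS).not_gt (hjt ▸ htC ⟨j, hj⟩)

lemma IsMaxOn.chernoffInfo_eq_minChernoff (hθ : ∀ j ≠ I, θ j ≠ θ I) (hσ : ∀ i, σ i ≠ 0)
    (hq : q ∈ stdSimplex ℝ ι) (hmax : IsMaxOn (minChernoff θ σ I) (stdSimplex ℝ ι) q)
    (hj : j ≠ I) : chernoffInfo θ σ I j q = minChernoff θ σ I q := by
  classical
  by_contra hne
  -- moving mass from the inactive arm `j` to all the others raises every active `C_i`
  obtain ⟨i, -, hiq, hle⟩ := hmax.exists_chernoffInfo_eq_and_nonpos hθ hσ hq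
    (v := fun k => 1 - if k = j then (Fintype.card ι : ℝ) else 0)
    (by simp [Finset.sum_sub_distrib])
  have hij : i ≠ j := by rintro rfl; exact hne hiq
  have : 0 ≤ balanceWeight σ I q i := by unfold balanceWeight; positivity
  simp only [hij, hj.symm, if_false, sub_zero] at hle
  linarith

lemma IsMaxOn.sq_div_sq_eq_sum [DecidableEq ι] (hθ : ∀ j ≠ I, θ j ≠ θ I)
    (hσ : ∀ i, σ i ≠ 0) (hq : q ∈ stdSimplex ℝ ι)
    (hmax : IsMaxOn (minChernoff θ σ I) (stdSimplex ℝ ι) q) :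
    q I ^ 2 / σ I ^ 2 = ∑ j ∈ Finset.univ.filter (· ≠ I), q j ^ 2 / σ j ^ 2 := by
  rw [← sum_balanceWeight_eq_one_iff (hσ I) (hmax.pos_of_minChernoff hθ hσ hq I).ne']
  set F := Finset.univ.filter (· ≠ I)
  set W := ∑ j ∈ F, balanceWeight σ I q j
  by_contra hW
  set s := (F.card : ℝ) / (W - 1)
  -- `v` solves `w_j v_{I*} + v_j = 1` for every `j`, which needs `∑ w_j ≠ 1`
  have hv : ∑ k, (if k = I then s else 1 - balanceWeight σ I q k * s) = 0 := by
    have hs : s * (W - 1) = F.card := div_mul_cancel₀ _ (sub_ne_zero.2 hW)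
    rw [sum_eq_add_sum_filter_ne _ I, if_pos rfl,
      Finset.sum_congr rfl fun k hk => if_neg (Finset.mem_filter.1 hk).2,
      Finset.sum_sub_distrib, ← Finset.sum_mul]
    simp only [Finset.sum_const, nsmul_eq_mul, mul_one]
    linarith
  obtain ⟨j, hj, -, hle⟩ := hmax.exists_chernoffInfo_eq_and_nonpos hθ hσ hq hv
  simp only [hj, if_true, if_false] at hle
  linarith

theorem eq_of_minChernoff_le_of_balanced [DecidableEq ι] (hθ : ∀ j ≠ I, θ j ≠ θ I)
    (hσ : ∀ i, σ i ≠ 0) (hq : q ∈ stdSimplex ℝ ι) (hqpos : ∀ i, 0 < q i)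
    (hinfo : ∀ i j, i ≠ I → j ≠ I → chernoffInfo θ σ I i q = chernoffInfo θ σ I j q)
    (hsos : q I ^ 2 / σ I ^ 2 = ∑ j ∈ Finset.univ.filter (· ≠ I), q j ^ 2 / σ j ^ 2)
    (hp : p ∈ stdSimplex ℝ ι) (hle : minChernoff θ σ I q ≤ minChernoff θ σ I p) : p = q := by
  set g : ι → ℝ := fun j => balanceWeight σ I q j * (p I - q I) + (p j - q j)
  have hC : ∀ j ≠ I, chernoffInfo θ σ I j q ≤ chernoffInfo θ σ I j p := by
    intro j hj
    obtain ⟨i, hi, hiq⟩ := exists_chernoffInfo_eq_minChernoff (θ := θ) (σ := σ) q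
    rw [hinfo j i hj hi, hiq]
    exact hle.trans (minChernoff_le p hj)
  -- `g j ≥ 0` by the tangent bound, and the balance conditions make the `g j` sum to `0`
  have hg : ∀ j ∈ Finset.univ.filter (· ≠ I), 0 ≤ g j := fun j hj' => by
    have hj := (Finset.mem_filter.1 hj').2
    refine (mul_nonneg_iff_of_pos_left (chernoffInfoSlope_pos (hθ j hj) hσ hqpos)).1 ?_
    linarith [hC j hj, chernoffInfo_le_add (I := I) (j := j) (θ := θ) hσ hqpos hp.1]
  have hsum : ∑ j ∈ Finset.univ.filter (· ≠ I), g j = 0 := by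
    have hW := (sum_balanceWeight_eq_one_iff (hσ I) (hqpos I).ne').2 hsos
    have hp1 := hp.2
    have hq1 := hq.2
    rw [sum_eq_add_sum_filter_ne _ I] at hp1 hq1
    simp only [g, Finset.sum_add_distrib, ← Finset.sum_mul, Finset.sum_sub_distrib]
    rw [hW]
    linarith
  have hg0 := (Finset.sum_eq_zero_iff_of_nonneg hg).1 hsum
  refine eq_of_mem_stdSimplex_of_mul_eq_mul hp hq (hqpos I).ne' fun j => ?_
  by_cases hj : j = I
  · rw [hj]
  by_contra hne
  have hlt := chernoffInfo_lt_add (hθ j hj) hσ hqpos hp.1 hne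
  rw [show balanceWeight σ I q j * (p I - q I) + (p j - q j) = 0 from
    hg0 j (Finset.mem_filter.2 ⟨Finset.mem_univ j, hj⟩)] at hlt
  linarith [hC j hj]

end Bandit

end

/-- For Gaussian BAI with a unique best arm, the maximin problem
`max_{p ∈ S_K} min_{j ≠ I*} C_j(p)` has a unique maximizer `p*`, which is
component-wise strictly positive, and `p*` is the unique component-wise strictly
positive point of the simplex satisfying both the information balance condition and
the sum-of-squares balance condition. -/
theorem stmt2 (K : ℕ) (hK : 2 ≤ K) (θ σ : Fin K → ℝ) (Istar : Fin K)
    (hbest : ∀ j, j ≠ Istar → θ j < θ Istar) (hσ : ∀ i, 0 < σ i) :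
    let S : Set (Fin K → ℝ) := {p | (∀ i, 0 ≤ p i) ∧ ∑ i, p i = 1}
    let C : Fin K → (Fin K → ℝ) → ℝ := fun j p =>
      (θ Istar - θ j) ^ 2 * p Istar * p j / (2 * (σ Istar ^ 2 * p j + σ j ^ 2 * p Istar))
    let Γ : (Fin K → ℝ) → ℝ := fun p => ⨅ j : {j : Fin K // j ≠ Istar}, C j p
    ∃ pstar : Fin K → ℝ,
      pstar ∈ S ∧ (∀ i, 0 < pstar i) ∧ IsMaxOn Γ S pstar ∧
      (∀ q ∈ S, IsMaxOn Γ S q → q = pstar) ∧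
      (∀ i j : Fin K, i ≠ Istar → j ≠ Istar → C i pstar = C j pstar) ∧
      (pstar Istar ^ 2 / σ Istar ^ 2 =
        ∑ j ∈ Finset.univ.filter (· ≠ Istar), pstar j ^ 2 / σ j ^ 2) ∧
      (∀ q ∈ S, (∀ i, 0 < q i) →
        (∀ i j : Fin K, i ≠ Istar → j ≠ Istar → C i q = C j q) →
        (q Istar ^ 2 / σ Istar ^ 2 =
          ∑ j ∈ Finset.univ.filter (· ≠ Istar), q j ^ 2 / σ j ^ 2) →
        q = pstar) := by
  intro S C Γ
  have : Nontrivial (Fin K) := Fin.nontrivial_iff_two_le.2 hK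
  have hθ : ∀ j ≠ Istar, θ j ≠ θ Istar := fun j hj => (hbest j hj).ne
  have hσ' : ∀ i, σ i ≠ 0 := fun i => (hσ i).ne'
  obtain ⟨p, hp, hmax⟩ := exists_isMaxOn_minChernoff (θ := θ) (I := Istar) hσ'
  have hpos := hmax.pos_of_minChernoff hθ hσ' hp
  have hinfo : ∀ i j, i ≠ Istar → j ≠ Istar → C i p = C j p := fun i j hi hj =>
    (hmax.chernoffInfo_eq_minChernoff hθ hσ' hp hi).trans
      (hmax.chernoffInfo_eq_minChernoff hθ hσ' hp hj).symm
  have hsos := hmax.sq_div_sq_eq_sum hθ hσ' hp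
  refine ⟨p, hp, hpos, hmax, fun q hq hqmax => ?_, hinfo, hsos,
    fun q hq hqpos hqinfo hqsos => ?_⟩
  · exact eq_of_minChernoff_le_of_balanced hθ hσ' hp hpos hinfo hsos hq (hqmax hp)
  · exact (eq_of_minChernoff_le_of_balanced hθ hσ' hq hqpos hqinfo hqsos hp (hmax hq)).symm
end

section
/- Let θ_i > θ_j be real numbers, let σ_i, σ_j > 0, and let p_i, p_j > 0. Then the infimum over all pairs (u, v) ∈ ℝ² with v ≥ u of p_i (θ_i − u)²/(2σ_i²) + p_j (θ_j − v)²/(2σ_j²) equals (θ_i − θ_j)² / (2(σ_i²/p_i + σ_j²/p_j)), and it is attained uniquely at u = v = ϑ̄, where ϑ̄ = (p_i θ_i/σ_i² + p_j θ_j/σ_j²) / (p_i/σ_i² + p_j/σ_j²). -/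
/-- For `θ_i > θ_j`, `σ_i, σ_j > 0` and `p_i, p_j > 0`, the infimum of
`p_i (θ_i − u)²/(2σ_i²) + p_j (θ_j − v)²/(2σ_j²)` over `{(u,v) : v ≥ u}` equals
`(θ_i − θ_j)² / (2(σ_i²/p_i + σ_j²/p_j))`, attained uniquely at `u = v = ϑ̄` with
`ϑ̄ = (p_i θ_i/σ_i² + p_j θ_j/σ_j²)/(p_i/σ_i² + p_j/σ_j²)`. -/
theorem stmt3 (θi θj σi σj pi pj : ℝ) (hθ : θj < θi) (hσi : 0 < σi) (hσj : 0 < σj)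
    (hpi : 0 < pi) (hpj : 0 < pj) :
    let f : ℝ × ℝ → ℝ := fun uv =>
      pi * (θi - uv.1) ^ 2 / (2 * σi ^ 2) + pj * (θj - uv.2) ^ 2 / (2 * σj ^ 2)
    let A : Set (ℝ × ℝ) := {uv | uv.1 ≤ uv.2}
    let ϑ : ℝ := (pi * θi / σi ^ 2 + pj * θj / σj ^ 2) / (pi / σi ^ 2 + pj / σj ^ 2)
    IsLeast (f '' A) ((θi - θj) ^ 2 / (2 * (σi ^ 2 / pi + σj ^ 2 / pj))) ∧
      (∀ uv ∈ A, f uv = (θi - θj) ^ 2 / (2 * (σi ^ 2 / pi + σj ^ 2 / pj)) →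
        uv = (ϑ, ϑ)) := by
  intro f A ϑ
  have hσi2 : (0:ℝ) < σi ^ 2 := by positivity
  have hσj2 : (0:ℝ) < σj ^ 2 := by positivity
  set a : ℝ := pi / σi ^ 2 with ha
  set b : ℝ := pj / σj ^ 2 with hb
  have hA : 0 < a := by positivity
  have hB : 0 < b := by positivity
  have hab : 0 < a + b := by positivity
  have hT : (θi - θj) ^ 2 / (2 * (σi ^ 2 / pi + σj ^ 2 / pj))
      = a * b * (θi - θj) ^ 2 / (2 * (a + b)) := by
    rw [ha, hb]
    field_simp
    ring
  have hf : ∀ u v : ℝ, f (u, v) = a * (θi - u) ^ 2 / 2 + b * (θj - v) ^ 2 / 2 := by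
    intro u v
    simp only [f, ha, hb]
    field_simp
  have hϑ : ϑ = (a * θi + b * θj) / (a + b) := by
    simp only [ϑ, ha, hb]
    field_simp
  -- key identity helper: for u ≤ v,
  have key : ∀ u v : ℝ, u ≤ v →
      a * b * (θi - θj) ^ 2 / (2 * (a + b)) ≤ a * (θi - u) ^ 2 / 2 + b * (θj - v) ^ 2 / 2 := by
    intro u v huv
    rw [div_add_div _ _ (two_ne_zero) (two_ne_zero), div_le_div_iff₀ (by positivity) (by positivity)]
    have h1 : θi - θj ≤ (θi - u) - (θj - v) := by linarith
    have h2 : (0:ℝ) < θi - θj := by linarith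
    have h3 : 0 ≤ ((θi - u) - (θj - v) - (θi - θj)) * ((θi - u) - (θj - v) + (θi - θj)) := by
      apply mul_nonneg <;> linarith
    nlinarith [sq_nonneg (a * (θi - u) + b * (θj - v)), mul_pos hA hB,
      mul_nonneg (mul_pos hA hB).le h3]
  constructor
  · constructor
    · refine ⟨(ϑ, ϑ), ?_, ?_⟩
      · exact le_refl ϑ
      rw [hf, hT, hϑ]
      field_simp
      ring
    · rintro x ⟨⟨u, v⟩, huv, rfl⟩
      rw [hT, hf]
      exact key u v huv
  · rintro ⟨u, v⟩ huv heq
    rw [hf, hT] at heq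
    have huv' : u ≤ v := huv
    -- decompose: E + F = 0 with E, F ≥ 0
    have h2 : (0:ℝ) < θi - θj := by linarith
    have hE : 0 ≤ (a * (θi - u) + b * (θj - v)) ^ 2 := sq_nonneg _
    have h3 : 0 ≤ a * b * (((θi - u) - (θj - v) - (θi - θj)) * ((θi - u) - (θj - v) + (θi - θj))) := by
      apply mul_nonneg (mul_pos hA hB).le
      apply mul_nonneg <;> linarith
    have hpoly : (a * (θi - u) ^ 2 / 2 + b * (θj - v) ^ 2 / 2) * (2 * (a + b))
        = a * b * (θi - θj) ^ 2 := by
      rw [heq]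
      field_simp
    have hsum : (a * (θi - u) + b * (θj - v)) ^ 2
        + a * b * (((θi - u) - (θj - v) - (θi - θj)) * ((θi - u) - (θj - v) + (θi - θj))) = 0 := by
      linear_combination hpoly
    have hE0 : (a * (θi - u) + b * (θj - v)) ^ 2 = 0 := by linarith
    have hF0 : a * b * (((θi - u) - (θj - v) - (θi - θj)) * ((θi - u) - (θj - v) + (θi - θj))) = 0 := by
      linarith
    have hE0' : a * (θi - u) + b * (θj - v) = 0 := by
      exact pow_eq_zero_iff (n := 2) (by norm_num) |>.mp hE0
    have huv0 : u = v := by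
      rcases mul_eq_zero.mp hF0 with h | h
      · exact absurd h (ne_of_gt (mul_pos hA hB))
      rcases mul_eq_zero.mp h with h' | h'
      · linarith
      · linarith
    have hu : u = ϑ := by
      rw [hϑ]
      rw [eq_div_iff (ne_of_gt hab)]
      subst huv0
      linarith [hE0']
    rw [Prod.mk.injEq]
    exact ⟨hu, by rw [← huv0]; exact hu⟩
end

section
/- Let θ₁, θ₂ ∈ ℝ, a, b > 0, and define C(x, y) = (θ₁ − θ₂)² x y / (2(a y + b x)) for x, y > 0. Then for all x, y > 0: the partial derivative of C with respect to x equals (θ₁ − ϑ̄)²/(2a) and the partial derivative of C with respect to y equals (θ₂ − ϑ̄)²/(2b), where ϑ̄ = (x θ₁/a + y θ₂/b) / (x/a + y/b). -/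
/-!
With `D = θ₁ - θ₂`, the quotient rule gives `∂C/∂x = a y² D² / (2 (a y + b x)²)`, while the
deviation of `θ₁` from the precision-weighted mean is `θ₁ - ϑ̄ = a y D / (a y + b x)`; so both sides
agree. The `y`-derivative is the same computation with the two arms exchanged.
-/

lemma sub_weightedMean_eq {a b : ℝ} (ha : a ≠ 0) (hb : b ≠ 0) (θ1 θ2 : ℝ) {x y : ℝ}
    (h : a * y + b * x ≠ 0) :
    θ1 - (x * θ1 / a + y * θ2 / b) / (x / a + y / b) = a * y * (θ1 - θ2) / (a * y + b * x) := by
  have hs : x / a + y / b = (a * y + b * x) / (a * b) := by field_simp; ring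
  rw [hs, div_div_eq_mul_div, eq_div_iff h, sub_mul, div_mul_cancel₀ _ h]
  field_simp
  ring

lemma hasDerivAt_chernoff_left {a b : ℝ} (ha : a ≠ 0) (hb : b ≠ 0) (θ1 θ2 : ℝ) {x y : ℝ}
    (h : a * y + b * x ≠ 0) :
    HasDerivAt (fun t => (θ1 - θ2) ^ 2 * t * y / (2 * (a * y + b * t)))
      ((θ1 - (x * θ1 / a + y * θ2 / b) / (x / a + y / b)) ^ 2 / (2 * a)) x := by
  have hnum : HasDerivAt (fun t => (θ1 - θ2) ^ 2 * t * y) ((θ1 - θ2) ^ 2 * 1 * y) x :=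
    ((hasDerivAt_id x).const_mul _).mul_const y
  have hden : HasDerivAt (fun t => 2 * (a * y + b * t)) (2 * (b * 1)) x :=
    (((hasDerivAt_id x).const_mul b).const_add _).const_mul 2
  refine (hnum.div hden (mul_ne_zero two_ne_zero h)).congr_deriv ?_
  rw [sub_weightedMean_eq ha hb θ1 θ2 h]
  field_simp
  ring

/-- For `C(x,y) = (θ₁ − θ₂)² x y / (2(a y + b x))` with `a, b > 0`, the
partial derivatives at any `x, y > 0` are `∂C/∂x = (θ₁ − ϑ̄)²/(2a)` and
`∂C/∂y = (θ₂ − ϑ̄)²/(2b)`, where `ϑ̄ = (xθ₁/a + yθ₂/b)/(x/a + y/b)`. -/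
theorem stmt4 (θ1 θ2 a b : ℝ) (ha : 0 < a) (hb : 0 < b)
    (x y : ℝ) (hx : 0 < x) (hy : 0 < y) :
    HasDerivAt (fun t => (θ1 - θ2) ^ 2 * t * y / (2 * (a * y + b * t)))
      ((θ1 - (x * θ1 / a + y * θ2 / b) / (x / a + y / b)) ^ 2 / (2 * a)) x ∧
    HasDerivAt (fun t => (θ1 - θ2) ^ 2 * x * t / (2 * (a * t + b * x)))
      ((θ2 - (x * θ1 / a + y * θ2 / b) / (x / a + y / b)) ^ 2 / (2 * b)) y := by
  have h : a * y + b * x ≠ 0 := by positivity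
  refine ⟨hasDerivAt_chernoff_left ha.ne' hb.ne' θ1 θ2 h, ?_⟩
  have hswap := hasDerivAt_chernoff_left hb.ne' ha.ne' θ2 θ1 (x := y) (y := x) (by rwa [add_comm])
  convert hswap using 1
  · funext t
    ring
  · rw [add_comm (x * θ1 / a), add_comm (x / a)]
end

section
/- Let (Ω, F, P) be a probability space, let K ≥ 2, fix an index I* ∈ {1,…,K}, and let p_t : Ω → ℝ^K (t ∈ ℕ) be random vectors whose values are component-wise strictly positive and satisfy Σ_{i=1}^K p_{t,i} = 1. Let p* ∈ ℝ^K be component-wise strictly positive with Σ_{i=1}^K p*_i = 1. Then the following are equivalent: (1) for every i ∈ {1,…,K}, the sequence p_{t,i} 𝕄-converges to p*_i; (2) for every j ≠ I*, the sequence p_{t,j}/p_{t,I*} 𝕄-converges to p*_j/p*_{I*}. -/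
/-!
𝕄-convergence is stable under maps that are uniformly continuous near the limit, because
finitely many 𝕄-thresholds are dominated by the single threshold `∑ |Tᵢ|`, which is again
in 𝕄 (a finite sum of functions in every `Lᵖ`). Both directions are instances: the ratio
`x / y` is uniformly continuous near `(p*_j, p*_{I*})` since `p*_{I*} > 0`, and conversely
a point of the simplex is recovered from its ratios `rⱼ = pⱼ / p_{I*}` as `pᵢ = rᵢ / ∑ⱼ rⱼ`,
where `∑ⱼ rⱼ ≥ r_{I*} = 1` keeps the denominator away from zero.
-/

open MeasureTheory

/-- A real-valued random variable belongs to the class 𝕄 if all its moments of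
order `p ≥ 1` are finite. -/
def MemClassM {Ω : Type*} [MeasurableSpace Ω] (P : Measure Ω) (T : Ω → ℝ) : Prop :=
  ∀ p : ℝ, 1 ≤ p → Integrable (fun ω => |T ω| ^ p) P

/-- 𝕄-convergence of a sequence of real random variables to a constant: for every
`ε > 0` there is `T ∈ 𝕄` such that `|X_t − x| ≤ ε` pointwise for all `t ≥ T`. -/
def MConv {Ω : Type*} [MeasurableSpace Ω] (P : Measure Ω) (X : ℕ → Ω → ℝ) (x : ℝ) : Prop :=
  ∀ ε : ℝ, 0 < ε → ∃ T : Ω → ℝ, MemClassM P T ∧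
    ∀ ω, ∀ t : ℕ, T ω ≤ (t : ℝ) → |X t ω - x| ≤ ε

section MClass

variable {Ω : Type*} [MeasurableSpace Ω] {P : Measure Ω}

lemma memClassM_iff_forall_memLp {T : Ω → ℝ} (hT : AEStronglyMeasurable T P) :
    MemClassM P T ↔ ∀ p : ℝ, 1 ≤ p → MemLp T (ENNReal.ofReal p) P := by
  refine forall₂_congr fun p hp => ?_
  have hp0 : 0 < p := zero_lt_one.trans_le hp
  rw [← integrable_norm_rpow_iff hT (by simpa using hp0) ENNReal.ofReal_ne_top,
    ENNReal.toReal_ofReal hp0.le]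
  simp only [Real.norm_eq_abs]

lemma MemClassM.abs {T : Ω → ℝ} (h : MemClassM P T) : MemClassM P fun ω => |T ω| := by
  simpa only [MemClassM, abs_abs] using h

lemma MemClassM.aestronglyMeasurable_abs {T : Ω → ℝ} (h : MemClassM P T) :
    AEStronglyMeasurable (fun ω => |T ω|) P := by
  simpa only [Real.rpow_one] using (h 1 le_rfl).aestronglyMeasurable

lemma MemClassM.sum_abs {ι : Type*} (s : Finset ι) {T : ι → Ω → ℝ}
    (h : ∀ i ∈ s, MemClassM P (T i)) : MemClassM P fun ω => ∑ i ∈ s, |T i ω| := by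
  have hLp : ∀ p : ℝ, 1 ≤ p → MemLp (fun ω => ∑ i ∈ s, |T i ω|) (ENNReal.ofReal p) P :=
    fun p hp => memLp_finsetSum s fun i hi =>
      (memClassM_iff_forall_memLp (h i hi).aestronglyMeasurable_abs).1 (h i hi).abs p hp
  exact (memClassM_iff_forall_memLp (hLp 1 le_rfl).aestronglyMeasurable).2 hLp

lemma exists_memClassM_forall_le {ι : Type*} [Fintype ι] {T : ι → Ω → ℝ}
    (h : ∀ i, MemClassM P (T i)) : ∃ S : Ω → ℝ, MemClassM P S ∧ ∀ i ω, T i ω ≤ S ω :=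
  ⟨fun ω => ∑ i, |T i ω|, MemClassM.sum_abs _ fun i _ => h i, fun i ω =>
    (le_abs_self _).trans (Finset.single_le_sum (fun j _ => abs_nonneg (T j ω)) (Finset.mem_univ i))⟩

lemma MConv.of_forall_eq {X : ℕ → Ω → ℝ} {x : ℝ} (h : ∀ t ω, X t ω = x) : MConv P X x :=
  fun _ hε => ⟨0, fun p hp => by simp [Real.zero_rpow (zero_lt_one.trans_le hp).ne'],
    fun ω t _ => by simpa [h t ω] using hε.le⟩

theorem MConv.of_forall_abs_le {ι : Type*} [Fintype ι] {X : ι → ℕ → Ω → ℝ} {x : ι → ℝ}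
    (hX : ∀ i, MConv P (X i) (x i)) {Y : ℕ → Ω → ℝ} {y : ℝ}
    (hXY : ∀ ε > 0, ∃ δ > 0, ∀ t ω, (∀ i, |X i t ω - x i| ≤ δ) → |Y t ω - y| ≤ ε) :
    MConv P Y y := by
  intro ε hε
  obtain ⟨δ, hδ, hδY⟩ := hXY ε hε
  choose T hT hTX using fun i => hX i δ hδ
  obtain ⟨S, hS, hTS⟩ := exists_memClassM_forall_le hT
  exact ⟨S, hS, fun ω t ht => hδY t ω fun i => hTX i ω t ((hTS i ω).trans ht)⟩

end MClass

section Ratios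

lemma abs_div_sub_div_le_of_half_le {x y a b : ℝ} (hb : 0 < b) (hy : b / 2 ≤ y) :
    |x / y - a / b| ≤ 2 / b * |x - a| + 2 * |a| / b ^ 2 * |y - b| := by
  have hy0 : 0 < y := by linarith
  have hsplit : x / y - a / b = (x - a) / y - a / b * ((y - b) / y) := by field_simp; ring
  have hinv : 1 / y ≤ 2 / b := by rw [div_le_div_iff₀ hy0 hb]; linarith
  calc |x / y - a / b| ≤ |x - a| * (1 / y) + |a| / b * (|y - b| * (1 / y)) := by
        rw [hsplit]
        refine (abs_sub _ _).trans_eq ?_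
        simp only [abs_div, abs_mul, abs_of_pos hy0, abs_of_pos hb, div_eq_mul_one_div |_ - _|]
    _ ≤ |x - a| * (2 / b) + |a| / b * (|y - b| * (2 / b)) := by gcongr
    _ = 2 / b * |x - a| + 2 * |a| / b ^ 2 * |y - b| := by ring

lemma exists_pos_forall_abs_div_sub_div_le {a b ε : ℝ} (hb : 0 < b) (hε : 0 < ε) :
    ∃ δ > 0, ∀ x y, |x - a| ≤ δ → |y - b| ≤ δ → |x / y - a / b| ≤ ε := by
  set C := 2 / b + 2 * |a| / b ^ 2
  have hC : 0 < C := by positivity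
  refine ⟨min (b / 2) (ε / C), by positivity, fun x y hx hy => ?_⟩
  have hyb : b / 2 ≤ y := by linarith [(abs_le.1 (hy.trans (min_le_left _ _))).1]
  calc |x / y - a / b| ≤ 2 / b * |x - a| + 2 * |a| / b ^ 2 * |y - b| :=
        abs_div_sub_div_le_of_half_le hb hyb
    _ ≤ C * min (b / 2) (ε / C) := by rw [add_mul]; gcongr
    _ ≤ C * (ε / C) := by gcongr; exact min_le_right _ _
    _ = ε := by field_simp

lemma abs_div_sub_div_le_of_one_le {r S r' S' : ℝ} (hS : 1 ≤ S) (hS' : 1 ≤ S') (hr' : 0 ≤ r')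
    (hr'S' : r' ≤ S') : |r / S - r' / S'| ≤ |r - r'| + |S - S'| := by
  have hS0 : 0 < S := by linarith
  have hS'0 : 0 < S' := by linarith
  have hsplit : r / S - r' / S' = (r - r') / S - r' / S' * ((S - S') / S) := by field_simp; ring
  have hfrac : r' / S' ≤ 1 := (div_le_one hS'0).2 hr'S'
  calc |r / S - r' / S'| ≤ |r - r'| / S + r' / S' * (|S - S'| / S) := by
        rw [hsplit]
        refine (abs_sub _ _).trans_eq ?_
        simp only [abs_div, abs_mul, abs_of_pos hS0, abs_of_pos hS'0, abs_of_nonneg hr']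
    _ ≤ |r - r'| + 1 * |S - S'| :=
        add_le_add (div_le_self (abs_nonneg _) hS)
          (mul_le_mul hfrac (div_le_self (abs_nonneg _) hS) (by positivity) zero_le_one)
    _ = |r - r'| + |S - S'| := by rw [one_mul]

variable {ι : Type*} [Fintype ι]

lemma one_le_sum_div {q : ι → ℝ} (hq : ∀ i, 0 < q i) (I : ι) : 1 ≤ ∑ j, q j / q I :=
  (div_self (hq I).ne').symm.le.trans
    (Finset.single_le_sum (fun j _ => (div_pos (hq j) (hq I)).le) (Finset.mem_univ I))

lemma eq_div_sum_div {q : ι → ℝ} (hsum : ∑ i, q i = 1) {I : ι} (hI : q I ≠ 0) (i : ι) :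
    q i = q i / q I / ∑ j, q j / q I := by
  rw [← Finset.sum_div, hsum]
  field_simp

lemma abs_sub_le_of_forall_abs_div_sub_div_le {q q' : ι → ℝ} (hq : ∀ i, 0 < q i)
    (hq' : ∀ i, 0 < q' i) (hsum : ∑ i, q i = 1) (hsum' : ∑ i, q' i = 1) (I : ι) {δ : ℝ}
    (hδ : ∀ j, |q j / q I - q' j / q' I| ≤ δ) (i : ι) :
    |q i - q' i| ≤ (Fintype.card ι + 1) * δ := by
  have hden : |∑ j, q j / q I - ∑ j, q' j / q' I| ≤ Fintype.card ι * δ := by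
    rw [← Finset.sum_sub_distrib]
    refine (Finset.abs_sum_le_sum_abs _ _).trans ?_
    simpa using Finset.sum_le_sum fun j (_ : j ∈ Finset.univ) => hδ j
  have hnum : q' i / q' I ≤ ∑ j, q' j / q' I :=
    Finset.single_le_sum (fun j _ => (div_pos (hq' j) (hq' I)).le) (Finset.mem_univ i)
  rw [eq_div_sum_div hsum (hq I).ne' i, eq_div_sum_div hsum' (hq' I).ne' i]
  calc _ ≤ |q i / q I - q' i / q' I| + |∑ j, q j / q I - ∑ j, q' j / q' I| :=
        abs_div_sub_div_le_of_one_le (one_le_sum_div hq I) (one_le_sum_div hq' I)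
          (div_pos (hq' i) (hq' I)).le hnum
    _ ≤ δ + Fintype.card ι * δ := add_le_add (hδ i) hden
    _ = (Fintype.card ι + 1) * δ := by ring

end Ratios

theorem stmt9_general {Ω : Type*} [MeasurableSpace Ω] (P : Measure Ω)
    (K : ℕ) (Istar : Fin K)
    (p : ℕ → Ω → Fin K → ℝ)
    (hpos : ∀ t ω i, 0 < p t ω i) (hsum : ∀ t ω, ∑ i, p t ω i = 1)
    (pstar : Fin K → ℝ) (hpstar : ∀ i, 0 < pstar i) (hsumstar : ∑ i, pstar i = 1) :
    (∀ i : Fin K, MConv P (fun t ω => p t ω i) (pstar i)) ↔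
      (∀ j : Fin K, j ≠ Istar →
        MConv P (fun t ω => p t ω j / p t ω Istar) (pstar j / pstar Istar)) := by
  constructor
  · refine fun h j _ => MConv.of_forall_abs_le h fun ε hε => ?_
    obtain ⟨δ, hδ, hdiv⟩ := exists_pos_forall_abs_div_sub_div_le (a := pstar j) (hpstar Istar) hε
    exact ⟨δ, hδ, fun t ω hp => hdiv _ _ (hp j) (hp Istar)⟩
  · intro h i
    have hratio : ∀ j, MConv P (fun t ω => p t ω j / p t ω Istar) (pstar j / pstar Istar) := by
      intro j
      rcases eq_or_ne j Istar with rfl | hj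
      · exact MConv.of_forall_eq fun t ω => by
          rw [div_self (hpos t ω j).ne', div_self (hpstar j).ne']
      · exact h j hj
    refine MConv.of_forall_abs_le hratio fun ε hε => ⟨ε / (K + 1), by positivity, fun t ω hr => ?_⟩
    calc |p t ω i - pstar i| ≤ (Fintype.card (Fin K) + 1) * (ε / (K + 1)) :=
          abs_sub_le_of_forall_abs_div_sub_div_le (hpos t ω) hpstar (hsum t ω) hsumstar Istar hr i
      _ = ε := by rw [Fintype.card_fin]; field_simp

/-- For strictly positive random allocation vectors `p_t` in the
probability simplex and a strictly positive target `p*` in the simplex,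
coordinate-wise 𝕄-convergence `p_{t,i} → p*_i` is equivalent to 𝕄-convergence of
the ratios `p_{t,j}/p_{t,I*} → p*_j/p*_{I*}` for all `j ≠ I*`. -/
theorem stmt9 {Ω : Type*} [MeasurableSpace Ω] (P : Measure Ω) [IsProbabilityMeasure P]
    (K : ℕ) (hK : 2 ≤ K) (Istar : Fin K)
    (p : ℕ → Ω → Fin K → ℝ)
    (hpos : ∀ t ω i, 0 < p t ω i) (hsum : ∀ t ω, ∑ i, p t ω i = 1)
    (pstar : Fin K → ℝ) (hpstar : ∀ i, 0 < pstar i) (hsumstar : ∑ i, pstar i = 1) :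
    (∀ i : Fin K, MConv P (fun t ω => p t ω i) (pstar i)) ↔
      (∀ j : Fin K, j ≠ Istar →
        MConv P (fun t ω => p t ω j / p t ω Istar) (pstar j / pstar Istar)) :=
  stmt9_general P K Istar p hpos hsum pstar hpstar hsumstar
end

section
/- Let K ≥ 2 and let α, p ∈ ℝ^K be component-wise strictly positive with Σ_{i=1}^K α_i = 1 and Σ_{i=1}^K p_i = 1. For each j define ψ_j = α_j · Σ_{ℓ ≠ j} (α_ℓ/(1 − α_j)) · p_ℓ/(p_j + p_ℓ) + Σ_{ℓ ≠ j} α_ℓ · (α_j/(1 − α_ℓ)) · p_ℓ/(p_j + p_ℓ). Let J¹, J² ∈ {1,…,K} with J¹ ≠ J², α_{J¹} ≥ α_i for all i, and α_{J²} ≥ α_i for all i ≠ J¹, and let J be an element of {J¹, J²} with p_J = min{p_{J¹}, p_{J²}}. Then ψ_J ≥ 1/(2K(K − 1)). -/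
/-- Under top-two Thompson sampling with information-directed
selection, the less-sampled arm `J` among the two arms `J¹, J²` with largest
posterior probabilities of being best receives sampling probability at least
`1/(2K(K−1))`. -/
theorem stmt11 (K : ℕ) (hK : 2 ≤ K) (α p : Fin K → ℝ)
    (hα : ∀ i, 0 < α i) (hp : ∀ i, 0 < p i)
    (hαs : ∑ i, α i = 1) (hps : ∑ i, p i = 1)
    (ψ : Fin K → ℝ)
    (hψ : ∀ j, ψ j =
      α j * ∑ ℓ ∈ Finset.univ.filter (· ≠ j), (α ℓ / (1 - α j)) * (p ℓ / (p j + p ℓ))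
        + ∑ ℓ ∈ Finset.univ.filter (· ≠ j), α ℓ * (α j / (1 - α ℓ)) * (p ℓ / (p j + p ℓ)))
    (J1 J2 : Fin K) (hne : J1 ≠ J2)
    (hJ1 : ∀ i, α i ≤ α J1) (hJ2 : ∀ i, i ≠ J1 → α i ≤ α J2)
    (J : Fin K) (hJ : J = J1 ∨ J = J2) (hJmin : p J = min (p J1) (p J2)) :
    1 / (2 * (K : ℝ) * ((K : ℝ) - 1)) ≤ ψ J := by
  have hKR : (2:ℝ) ≤ (K:ℝ) := by exact_mod_cast hK
  have hK0 : (0:ℝ) < (K:ℝ) := by linarith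
  have hKm0 : (0:ℝ) < (K:ℝ) - 1 := by linarith
  -- every α i < 1
  have hαlt : ∀ i, α i < 1 := by
    intro i
    obtain ⟨j, hj⟩ := Fintype.exists_ne_of_one_lt_card
      (by simpa [Fintype.card_fin] using (by omega : 1 < K)) i
    calc α i < ∑ k, α k := by
          refine Finset.single_lt_sum hj (Finset.mem_univ i) (Finset.mem_univ j)
            (hα j) (fun k _ _ => (hα k).le)
      _ = 1 := hαs
  have h1m : 0 < 1 - α J1 := by linarith [hαlt J1]
  -- α J1 ≥ 1/K
  have ha : 1 / (K:ℝ) ≤ α J1 := by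
    rw [div_le_iff₀ hK0]
    have hle : ∑ i, α i ≤ ∑ _i : Fin K, α J1 := Finset.sum_le_sum (fun i _ => hJ1 i)
    have hc : ∑ _i : Fin K, α J1 = (K:ℝ) * α J1 := by
      simp [Finset.sum_const, Fintype.card_fin, nsmul_eq_mul]
    nlinarith
  -- (K-1) * α J2 ≥ 1 - α J1
  have ha2 : 1 - α J1 ≤ ((K:ℝ) - 1) * α J2 := by
    have herase := Finset.sum_erase_add Finset.univ α (Finset.mem_univ J1)
    have hle : ∑ i ∈ Finset.univ.erase J1, α i
        ≤ (Finset.univ.erase J1).card • α J2 :=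
      Finset.sum_le_card_nsmul _ _ _ (fun i hi => hJ2 i (Finset.ne_of_mem_erase hi))
    have hcard : (Finset.univ.erase J1).card = K - 1 := by
      simp [Finset.card_erase_of_mem, Fintype.card_fin]
    rw [hcard] at hle
    have hcast : ((K - 1 : ℕ) : ℝ) = (K:ℝ) - 1 := by
      have h1K : 1 ≤ K := by omega
      push_cast [Nat.cast_sub h1K]
      ring
    rw [nsmul_eq_mul, hcast] at hle
    rw [hαs] at herase
    linarith
  have hb : 1 / ((K:ℝ) - 1) ≤ α J2 / (1 - α J1) := by
    rw [div_le_div_iff₀ hKm0 h1m]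
    nlinarith
  -- product of three lower bounds
  have prod3 : ∀ a b c x y z : ℝ, 0 ≤ x → 0 ≤ y → 0 ≤ z →
      x ≤ a → y ≤ b → z ≤ c → x * y * z ≤ a * b * c := by
    intro a b c x y z hx hy hz h1 h2 h3
    have hab : x * y ≤ a * b := mul_le_mul h1 h2 hy (hx.trans h1)
    have h4 : x * y * z ≤ a * b * z := mul_le_mul_of_nonneg_right hab hz
    have h5 : a * b * z ≤ a * b * c :=
      mul_le_mul_of_nonneg_left h3 (mul_nonneg (hx.trans h1) (hy.trans h2))
    linarith
  have hx0 : (0:ℝ) ≤ 1 / (K:ℝ) := by positivity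
  have hy0 : (0:ℝ) ≤ 1 / ((K:ℝ) - 1) := (one_div_pos.mpr hKm0).le
  have hz0 : (0:ℝ) ≤ (1:ℝ) / 2 := by norm_num
  -- rewrite target constant
  have hconst : 1 / (2 * (K:ℝ) * ((K:ℝ) - 1))
      = 1 / (K:ℝ) * (1 / ((K:ℝ) - 1)) * (1 / 2) := by
    field_simp
  rcases hJ with h | h <;> rw [h] at hJmin ⊢
  · -- J = J1 ; use first sum, term ℓ = J2
    have hple : p J1 ≤ p J2 := le_trans (le_of_eq hJmin) (min_le_right _ _)
    have hden : (0:ℝ) < p J1 + p J2 := by have := hp J1; have := hp J2; linarith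
    have hc : (1:ℝ) / 2 ≤ p J2 / (p J1 + p J2) := by
      rw [div_le_div_iff₀ two_pos hden]
      linarith
    rw [hψ J1]
    have hmem : J2 ∈ Finset.univ.filter (· ≠ J1) := by simp [hne.symm]
    have hsum1 : (α J2 / (1 - α J1)) * (p J2 / (p J1 + p J2))
        ≤ ∑ ℓ ∈ Finset.univ.filter (· ≠ J1),
            (α ℓ / (1 - α J1)) * (p ℓ / (p J1 + p ℓ)) := by
      refine Finset.single_le_sum
        (f := fun ℓ => (α ℓ / (1 - α J1)) * (p ℓ / (p J1 + p ℓ)))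
        (fun ℓ _ => ?_) hmem
      have h1 := hp J1; have h2 := hp ℓ
      exact mul_nonneg (div_nonneg (hα ℓ).le h1m.le)
        (div_nonneg (hp ℓ).le (by linarith))
    have hsum2 : 0 ≤ ∑ ℓ ∈ Finset.univ.filter (· ≠ J1),
        α ℓ * (α J1 / (1 - α ℓ)) * (p ℓ / (p J1 + p ℓ)) := by
      refine Finset.sum_nonneg (fun ℓ _ => ?_)
      have h1 := hαlt ℓ; have h2 := hp J1; have h3 := hp ℓ
      exact mul_nonneg (mul_nonneg (hα ℓ).le
        (div_nonneg (hα J1).le (by linarith))) (div_nonneg (hp ℓ).le (by linarith))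
    have hkey : 1 / (K:ℝ) * (1 / ((K:ℝ) - 1)) * (1 / 2)
        ≤ α J1 * (α J2 / (1 - α J1)) * (p J2 / (p J1 + p J2)) :=
      prod3 _ _ _ _ _ _ hx0 hy0 hz0 ha hb hc
    calc 1 / (2 * (K:ℝ) * ((K:ℝ) - 1))
        = 1 / (K:ℝ) * (1 / ((K:ℝ) - 1)) * (1 / 2) := hconst
      _ ≤ α J1 * (α J2 / (1 - α J1)) * (p J2 / (p J1 + p J2)) := hkey
      _ = α J1 * ((α J2 / (1 - α J1)) * (p J2 / (p J1 + p J2))) := by ring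
      _ ≤ α J1 * ∑ ℓ ∈ Finset.univ.filter (· ≠ J1),
            (α ℓ / (1 - α J1)) * (p ℓ / (p J1 + p ℓ)) :=
          mul_le_mul_of_nonneg_left hsum1 (hα J1).le
      _ ≤ _ := by linarith
  · -- J = J2 ; use second sum, term ℓ = J1
    have hple : p J2 ≤ p J1 := le_trans (le_of_eq hJmin) (min_le_left _ _)
    have hden : (0:ℝ) < p J2 + p J1 := by have := hp J1; have := hp J2; linarith
    have hc : (1:ℝ) / 2 ≤ p J1 / (p J2 + p J1) := by
      rw [div_le_div_iff₀ two_pos hden]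
      linarith
    rw [hψ J2]
    have hmem : J1 ∈ Finset.univ.filter (· ≠ J2) := by simp [hne]
    have hsum2 : α J1 * (α J2 / (1 - α J1)) * (p J1 / (p J2 + p J1))
        ≤ ∑ ℓ ∈ Finset.univ.filter (· ≠ J2),
            α ℓ * (α J2 / (1 - α ℓ)) * (p ℓ / (p J2 + p ℓ)) := by
      refine Finset.single_le_sum
        (f := fun ℓ => α ℓ * (α J2 / (1 - α ℓ)) * (p ℓ / (p J2 + p ℓ)))
        (fun ℓ _ => ?_) hmem
      have h1 := hαlt ℓ; have h2 := hp J2; have h3 := hp ℓ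
      exact mul_nonneg (mul_nonneg (hα ℓ).le
        (div_nonneg (hα J2).le (by linarith))) (div_nonneg (hp ℓ).le (by linarith))
    have hsum1 : 0 ≤ α J2 * ∑ ℓ ∈ Finset.univ.filter (· ≠ J2),
        (α ℓ / (1 - α J2)) * (p ℓ / (p J2 + p ℓ)) := by
      have h1m2 : 0 < 1 - α J2 := by linarith [hαlt J2]
      refine mul_nonneg (hα J2).le (Finset.sum_nonneg (fun ℓ _ => ?_))
      have h2 := hp J2; have h3 := hp ℓ
      exact mul_nonneg (div_nonneg (hα ℓ).le h1m2.le)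
        (div_nonneg (hp ℓ).le (by linarith))
    have hkey : 1 / (K:ℝ) * (1 / ((K:ℝ) - 1)) * (1 / 2)
        ≤ α J1 * (α J2 / (1 - α J1)) * (p J1 / (p J2 + p J1)) :=
      prod3 _ _ _ _ _ _ hx0 hy0 hz0 ha hb hc
    calc 1 / (2 * (K:ℝ) * ((K:ℝ) - 1))
        = 1 / (K:ℝ) * (1 / ((K:ℝ) - 1)) * (1 / 2) := hconst
      _ ≤ α J1 * (α J2 / (1 - α J1)) * (p J1 / (p J2 + p J1)) := hkey
      _ ≤ ∑ ℓ ∈ Finset.univ.filter (· ≠ J2),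
            α ℓ * (α J2 / (1 - α ℓ)) * (p ℓ / (p J2 + p ℓ)) := hsum2
      _ ≤ _ := by linarith
end

section
/- Let K ≥ 2, fix an index i⋆ ∈ {1,…,K}, and let w ∈ ℝ^K be component-wise nonnegative with Σ_{i=1}^K w_i = 1. Then: (i) if w_{i⋆}² − Σ_{j ≠ i⋆} w_j² ≤ 1/2, then w_{i⋆} ≤ 3/4; and (ii) if in addition w_{i⋆}² − Σ_{j ≠ i⋆} w_j² ≥ −1/(32(K − 1)), then w_{i⋆} ≥ 1/√(32(K − 1)). -/
/-- For an allocation `w` in the probability simplex over `K ≥ 2` arms: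
(i) if `w_{i⋆}² − Σ_{j ≠ i⋆} w_j² ≤ 1/2` then `w_{i⋆} ≤ 3/4`; (ii) if in addition
`w_{i⋆}² − Σ_{j ≠ i⋆} w_j² ≥ −1/(32(K−1))` then `w_{i⋆} ≥ 1/√(32(K−1))`. -/
theorem stmt12 (K : ℕ) (hK : 2 ≤ K) (istar : Fin K) (w : Fin K → ℝ)
    (hw : ∀ i, 0 ≤ w i) (hsum : ∑ i, w i = 1) :
    ((w istar ^ 2 - ∑ j ∈ Finset.univ.filter (· ≠ istar), w j ^ 2 ≤ 1 / 2) →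
      w istar ≤ 3 / 4) ∧
    ((w istar ^ 2 - ∑ j ∈ Finset.univ.filter (· ≠ istar), w j ^ 2 ≤ 1 / 2) →
      (-(1 / (32 * ((K : ℝ) - 1))) ≤
        w istar ^ 2 - ∑ j ∈ Finset.univ.filter (· ≠ istar), w j ^ 2) →
      1 / Real.sqrt (32 * ((K : ℝ) - 1)) ≤ w istar) := by
  set S := Finset.univ.filter (· ≠ istar) with hS
  have hSe : S = Finset.univ.erase istar := by rw [hS, Finset.filter_ne']
  have hcard : (S.card : ℝ) = (K : ℝ) - 1 := by
    rw [hSe, Finset.card_erase_of_mem (Finset.mem_univ _)]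
    simp [Nat.cast_sub (by omega : 1 ≤ K)]
  have hsumS : ∑ j ∈ S, w j = 1 - w istar := by
    have := Finset.add_sum_erase Finset.univ w (Finset.mem_univ istar)
    rw [hsum] at this
    rw [hSe]; linarith
  have hub : ∑ j ∈ S, w j ^ 2 ≤ (1 - w istar) ^ 2 := by
    rw [← hsumS]
    exact Finset.sum_sq_le_sq_sum_of_nonneg (fun i _ => hw i)
  have hlb : (1 - w istar) ^ 2 ≤ ((K : ℝ) - 1) * ∑ j ∈ S, w j ^ 2 := by
    rw [← hsumS, ← hcard]
    exact_mod_cast sq_sum_le_card_mul_sum_sq (s := S) (f := w)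
  have hK1 : (1 : ℝ) ≤ (K : ℝ) - 1 := by
    have : (2 : ℝ) ≤ (K : ℝ) := by exact_mod_cast hK
    linarith
  constructor
  · intro h1
    nlinarith [hw istar]
  · intro h1 h2
    have hi : w istar ≤ 3 / 4 := by nlinarith [hw istar]
    have hc : (0 : ℝ) < 32 * ((K : ℝ) - 1) := by linarith
    have ht2 : 1 / (32 * ((K : ℝ) - 1)) ≤ w istar ^ 2 := by
      have h2' : (∑ j ∈ S, w j ^ 2 - w istar ^ 2) * (32 * ((K : ℝ) - 1)) ≤ 1 :=
        (le_div_iff₀ hc).mp (by linarith)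
      rw [div_le_iff₀ hc]
      nlinarith [h2', hlb, hi, hK1,
        mul_nonneg (by linarith : (0:ℝ) ≤ 3/4 - w istar)
          (by linarith : (0:ℝ) ≤ 5/4 - w istar)]
    have hsq : Real.sqrt (32 * ((K : ℝ) - 1)) > 0 := Real.sqrt_pos.mpr hc
    rw [div_le_iff₀ hsq]
    nlinarith [Real.sq_sqrt hc.le, hw istar, Real.sqrt_nonneg (32 * ((K : ℝ) - 1)),
      mul_nonneg (hw istar) (Real.sqrt_nonneg (32 * ((K : ℝ) - 1)))]
end

section
/- Let K ≥ 1, let 𝔗 ∈ ℝ, let θ : {1,…,K} → ℝ with θ_i ≠ 𝔗 for a fixed index i, let σ : {1,…,K} → ℝ be strictly positive, and let p ∈ ℝ^K be component-wise nonnegative. Then the infimum, over all ϑ ∈ ℝ^K satisfying (𝔗 − ϑ_i)(𝔗 − θ_i) < 0, of Σ_{k=1}^K p_k (θ_k − ϑ_k)²/(2σ_k²) equals p_i (θ_i − 𝔗)²/(2σ_i²). -/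
/-- In the Gaussian thresholding bandit, the infimum over alternatives
`ϑ` with arm `i` strictly on the opposite side of the threshold `𝔗` of the weighted
KL divergence `Σ_k p_k (θ_k − ϑ_k)²/(2σ_k²)` equals `p_i (θ_i − 𝔗)²/(2σ_i²)`. -/
theorem stmt14 (K : ℕ) (hK : 1 ≤ K) (𝔗 : ℝ) (θ : Fin K → ℝ) (i : Fin K)
    (hθ : θ i ≠ 𝔗) (σ : Fin K → ℝ) (hσ : ∀ k, 0 < σ k)
    (p : Fin K → ℝ) (hp : ∀ k, 0 ≤ p k) :
    sInf ((fun ϑ : Fin K → ℝ => ∑ k, p k * (θ k - ϑ k) ^ 2 / (2 * σ k ^ 2)) ''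
        {ϑ | (𝔗 - ϑ i) * (𝔗 - θ i) < 0}) =
      p i * (θ i - 𝔗) ^ 2 / (2 * σ i ^ 2) := by
  set v : ℝ := p i * (θ i - 𝔗) ^ 2 / (2 * σ i ^ 2) with hv
  set f : (Fin K → ℝ) → ℝ := fun ϑ => ∑ k, p k * (θ k - ϑ k) ^ 2 / (2 * σ k ^ 2) with hf
  set S := f '' {ϑ | (𝔗 - ϑ i) * (𝔗 - θ i) < 0} with hS
  set s : ℝ := Real.sign (θ i - 𝔗) with hs
  have ha : θ i - 𝔗 ≠ 0 := sub_ne_zero.mpr hθ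
  have hsa : 0 < s * (θ i - 𝔗) := by
    rcases ha.lt_or_gt with h | h
    · rw [hs, Real.sign_of_neg h]; nlinarith
    · rw [hs, Real.sign_of_pos h]; nlinarith
  -- lower bound
  have hlb : ∀ x ∈ S, v ≤ x := by
    rintro x ⟨ϑ, hϑ, rfl⟩
    simp only [Set.mem_setOf_eq] at hϑ
    have hterm : v ≤ p i * (θ i - ϑ i) ^ 2 / (2 * σ i ^ 2) := by
      rw [hv]
      have hsq : (θ i - 𝔗) ^ 2 ≤ (θ i - ϑ i) ^ 2 := by nlinarith [sq_nonneg (𝔗 - ϑ i)]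
      have hσi := hσ i
      have h2 : (0:ℝ) < 2 * σ i ^ 2 := by positivity
      apply div_le_div_of_nonneg_right _ h2.le
      exact mul_le_mul_of_nonneg_left hsq (hp i)
    refine hterm.trans ?_
    apply Finset.single_le_sum (f := fun k => p k * (θ k - ϑ k) ^ 2 / (2 * σ k ^ 2))
      (fun k _ => ?_) (Finset.mem_univ i)
    exact div_nonneg (mul_nonneg (hp k) (sq_nonneg _)) (by nlinarith [hσ k])
  have hbdd : BddBelow S := ⟨v, hlb⟩
  -- membership of perturbed points
  have hmem : ∀ δ : ℝ, 0 < δ →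
      p i * (θ i - (𝔗 - δ * s)) ^ 2 / (2 * σ i ^ 2) ∈ S := by
    intro δ hδ
    refine ⟨Function.update θ i (𝔗 - δ * s), ?_, ?_⟩
    · simp only [Set.mem_setOf_eq, Function.update_self]
      have : 𝔗 - (𝔗 - δ * s) = δ * s := by ring
      rw [this]
      nlinarith
    · show ∑ k, p k * (θ k - Function.update θ i (𝔗 - δ * s) k) ^ 2 / (2 * σ k ^ 2) = _
      rw [Finset.sum_eq_single i]
      · simp
      · intro k _ hk
        simp [Function.update_of_ne hk]
      · simp
  have hne : S.Nonempty := ⟨_, hmem 1 one_pos⟩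
  refine le_antisymm ?_ (le_csInf hne hlb)
  -- upper bound via limit
  have hg : Filter.Tendsto (fun δ : ℝ => p i * (θ i - (𝔗 - δ * s)) ^ 2 / (2 * σ i ^ 2))
      (nhdsWithin 0 (Set.Ioi 0)) (nhds v) := by
    have hc : Continuous (fun δ : ℝ => p i * (θ i - (𝔗 - δ * s)) ^ 2 / (2 * σ i ^ 2)) := by
      fun_prop
    have := hc.tendsto 0
    simp only [zero_mul, sub_zero] at this
    exact this.mono_left nhdsWithin_le_nhds
  refine ge_of_tendsto hg ?_
  filter_upwards [self_mem_nhdsWithin] with δ hδ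
  exact csInf_le hbdd (hmem δ hδ)
end

section
/- Let K ≥ 2, let ε > 0, and let θ : {1,…,K} → ℝ have a unique best arm I* (θ_{I*} > θ_j for all j ≠ I*). For each arm i and allocation p in the probability simplex S_K define C^i_j(p) = (θ_i − θ_j + ε)² p_i p_j / (2(p_i + p_j)) for j ≠ i (with the convention 0 when p_i = p_j = 0), and set G_i = sup_{p ∈ S_K} min_{j ≠ i} C^i_j(p). Then for every arm i with θ_i ≥ θ_{I*} − ε one has G_i ≤ G_{I*}; consequently, the maximum of G_i over the set of ε-good arms {i : θ_i ≥ θ_{I*} − ε} equals G_{I*}. -/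
/-!
Swapping the allocations of an ε-good arm `i` and the best arm `b` turns every test for `i`
into a test for `b` with the same weights `p_i p_j / (2(p_i + p_j))` and a gap at least as large:
against arm `j ∉ {i, b}` the gap `θ_b − θ_j + ε` dominates `|θ_i − θ_j + ε|` because
`θ_j ≤ θ_b ≤ θ_i + ε`, and the test of `i` against `b` becomes the test of `b` against `i`,
whose gap `θ_b − θ_i + ε` dominates `|θ_i − θ_b + ε|`. Hence every value of the rate of `i`
is dominated by a value of the rate of `b`.
-/

open Finset

section

variable {ι : Type*} (θ : ι → ℝ) (ε : ℝ)

/-- The statistic `C^i_j(p)`. -/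
noncomputable def certStat (i j : ι) (p : ι → ℝ) : ℝ :=
  (θ i - θ j + ε) ^ 2 * p i * p j / (2 * (p i + p j))

noncomputable def certRate (i : ι) (p : ι → ℝ) : ℝ :=
  ⨅ j : {j // j ≠ i}, certStat θ ε i j p

/-- `G_i`. -/
noncomputable def certComplexity [Fintype ι] (i : ι) : ℝ :=
  sSup (certRate θ ε i '' stdSimplex ℝ ι)

variable {θ ε}

lemma certStat_le_certStat {i j i' j' : ι} {p q : ι → ℝ} (hi : q i' = p i) (hj : q j' = p j)
    (hpi : 0 ≤ p i) (hpj : 0 ≤ p j)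
    (hgap : (θ i - θ j + ε) ^ 2 ≤ (θ i' - θ j' + ε) ^ 2) :
    certStat θ ε i j p ≤ certStat θ ε i' j' q := by
  rw [certStat, certStat, hi, hj]
  gcongr

lemma certStat_le_half_sq [Fintype ι] {p : ι → ℝ} (hp : p ∈ stdSimplex ℝ ι) (i j : ι) :
    certStat θ ε i j p ≤ (θ i - θ j + ε) ^ 2 / 2 := by
  obtain ⟨hpi, -⟩ := mem_Icc_of_mem_stdSimplex hp i
  obtain ⟨hpj, hpj_le⟩ := mem_Icc_of_mem_stdSimplex hp j
  refine div_le_of_le_mul₀ (by linarith) (by positivity) ?_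
  have hprod : p i * p j ≤ p i + p j := by nlinarith
  nlinarith [mul_le_mul_of_nonneg_left hprod (sq_nonneg (θ i - θ j + ε))]

lemma certRate_le_sum [Fintype ι] {p : ι → ℝ} (hp : p ∈ stdSimplex ℝ ι) (i : ι) :
    certRate θ ε i p ≤ ∑ j, (θ i - θ j + ε) ^ 2 / 2 := by
  rcases isEmpty_or_nonempty {j // j ≠ i} with _ | ⟨⟨j⟩⟩
  · rw [certRate, Real.iInf_of_isEmpty]
    positivity
  · calc certRate θ ε i p ≤ certStat θ ε i j p := ciInf_le (Set.finite_range _).bddBelow j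
      _ ≤ (θ i - θ j + ε) ^ 2 / 2 := certStat_le_half_sq hp i j
      _ ≤ ∑ j, (θ i - θ j + ε) ^ 2 / 2 :=
        single_le_sum (f := fun j => (θ i - θ j + ε) ^ 2 / 2) (fun _ _ => by positivity)
          (mem_univ (j : ι))

lemma bddAbove_certRate_image [Fintype ι] (i : ι) :
    BddAbove (certRate θ ε i '' stdSimplex ℝ ι) :=
  ⟨_, Set.forall_mem_image.2 fun _ hp => certRate_le_sum hp i⟩

lemma comp_equiv_mem_stdSimplex [Fintype ι] {p : ι → ℝ} (hp : p ∈ stdSimplex ℝ ι) (σ : ι ≃ ι) :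
    p ∘ σ ∈ stdSimplex ℝ ι :=
  ⟨fun k => hp.1 (σ k), (Equiv.sum_comp σ p).trans hp.2⟩

variable [DecidableEq ι] {b : ι}

lemma sq_gap_le_sq_gap_swap (hmax : ∀ j, θ j ≤ θ b) (hε : 0 ≤ ε) {i : ι} (hi : θ b - ε ≤ θ i)
    (j : ι) : (θ i - θ (Equiv.swap i b j) + ε) ^ 2 ≤ (θ b - θ j + ε) ^ 2 := by
  have hib := hmax i
  have hjb := hmax j
  rw [Equiv.swap_apply_def]
  split_ifs with hji hjb' <;> subst_vars <;> apply sq_le_sq' <;> linarith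

lemma certRate_le_certRate_comp_swap [Fintype ι] (hmax : ∀ j, θ j ≤ θ b) (hε : 0 ≤ ε) {i : ι}
    (hi : θ b - ε ≤ θ i) {p : ι → ℝ} (hp : ∀ k, 0 ≤ p k) :
    certRate θ ε i p ≤ certRate θ ε b (p ∘ Equiv.swap i b) := by
  let e : {j // j ≠ b} ≃ {j // j ≠ i} := (Equiv.swap i b).subtypeEquiv fun j => by
    rw [Ne, Ne, Equiv.swap_apply_eq_iff, Equiv.swap_apply_left]
  rw [certRate, ← e.iInf_comp]
  refine ciInf_mono (Set.finite_range _).bddBelow fun j => ?_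
  exact certStat_le_certStat (by simp [Equiv.swap_apply_right]) rfl (hp _) (hp _)
    (sq_gap_le_sq_gap_swap hmax hε hi (j : ι))

lemma certComplexity_le_certComplexity_of_forall_le [Fintype ι] (hmax : ∀ j, θ j ≤ θ b)
    (hε : 0 ≤ ε) {i : ι} (hi : θ b - ε ≤ θ i) : certComplexity θ ε i ≤ certComplexity θ ε b := by
  have hne : (stdSimplex ℝ ι).Nonempty := ⟨_, single_mem_stdSimplex ℝ i⟩
  refine csSup_le (hne.image _) ?_
  rintro _ ⟨p, hp, rfl⟩
  exact (certRate_le_certRate_comp_swap hmax hε hi hp.1).trans <|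
    le_csSup (bddAbove_certRate_image b) ⟨_, comp_equiv_mem_stdSimplex hp _, rfl⟩

end

theorem stmt16_general (K : ℕ) (ε : ℝ) (hε : 0 < ε)
    (θ : Fin K → ℝ) (Istar : Fin K) (hbest : ∀ j, j ≠ Istar → θ j < θ Istar) :
    let S : Set (Fin K → ℝ) := {p | (∀ i, 0 ≤ p i) ∧ ∑ i, p i = 1}
    let C : Fin K → Fin K → (Fin K → ℝ) → ℝ := fun i j p =>
      (θ i - θ j + ε) ^ 2 * p i * p j / (2 * (p i + p j))
    let G : Fin K → ℝ := fun i =>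
      sSup ((fun p => ⨅ j : {j : Fin K // j ≠ i}, C i j p) '' S)
    (∀ i : Fin K, θ Istar - ε ≤ θ i → G i ≤ G Istar) ∧
    IsGreatest (G '' {i : Fin K | θ Istar - ε ≤ θ i}) (G Istar) := by
  intro S C G
  have hmax : ∀ j, θ j ≤ θ Istar := fun j =>
    (eq_or_ne j Istar).elim (fun h => h ▸ le_rfl) fun h => (hbest j h).le
  have hG : ∀ i, θ Istar - ε ≤ θ i → G i ≤ G Istar := fun i hi =>
    certComplexity_le_certComplexity_of_forall_le hmax hε.le hi
  refine ⟨hG, ⟨Istar, by simpa using hε.le, rfl⟩, ?_⟩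
  rintro _ ⟨i, hi, rfl⟩
  exact hG i hi

/-- In Gaussian ε-best-arm identification with unit variances, the best
arm `I*` is the easiest arm to certify as ε-good: `G_i ≤ G_{I*}` for every ε-good arm
`i`, hence the maximum of `G_i` over ε-good arms equals `G_{I*}`, where
`G_i = sup_{p ∈ S_K} min_{j ≠ i} C^i_j(p)` and
`C^i_j(p) = (θ_i − θ_j + ε)² p_i p_j / (2(p_i + p_j))`. -/
theorem stmt16 (K : ℕ) (hK : 2 ≤ K) (ε : ℝ) (hε : 0 < ε)
    (θ : Fin K → ℝ) (Istar : Fin K) (hbest : ∀ j, j ≠ Istar → θ j < θ Istar) :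
    let S : Set (Fin K → ℝ) := {p | (∀ i, 0 ≤ p i) ∧ ∑ i, p i = 1}
    let C : Fin K → Fin K → (Fin K → ℝ) → ℝ := fun i j p =>
      (θ i - θ j + ε) ^ 2 * p i * p j / (2 * (p i + p j))
    let G : Fin K → ℝ := fun i =>
      sSup ((fun p => ⨅ j : {j : Fin K // j ≠ i}, C i j p) '' S)
    (∀ i : Fin K, θ Istar - ε ≤ θ i → G i ≤ G Istar) ∧
    IsGreatest (G '' {i : Fin K | θ Istar - ε ≤ θ i}) (G Istar) :=
  stmt16_general K ε hε θ Istar hbest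
end

section
/- Let ψ : ℕ → ℝ satisfy 0 ≤ ψ_t ≤ 1 for all t, define Ψ_t = Σ_{ℓ=0}^{t−1} ψ_ℓ (so Ψ_0 = 0), let q > 0, and let T̃ ∈ ℕ. Suppose that for every t ≥ T̃, Ψ_t > q·t implies ψ_t = 0. Then for every natural number t with t ≥ T̃ and t ≥ Ψ_{T̃}/q, one has Ψ_t ≤ q·t + 1. -/
/-- Self-correcting allocation: if `0 ≤ ψ_t ≤ 1`,
`Ψ_t = Σ_{ℓ<t} ψ_ℓ`, and for all `t ≥ T̃` the overshoot `Ψ_t > q·t` forces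
`ψ_t = 0`, then for every `t ≥ T̃` with `t ≥ Ψ_{T̃}/q` one has `Ψ_t ≤ q·t + 1`. -/
theorem stmt18 (ψ : ℕ → ℝ) (hψ : ∀ t, 0 ≤ ψ t ∧ ψ t ≤ 1)
    (Ψ : ℕ → ℝ) (hΨ : ∀ t, Ψ t = ∑ ℓ ∈ Finset.range t, ψ ℓ)
    (q : ℝ) (hq : 0 < q) (T : ℕ)
    (hself : ∀ t : ℕ, T ≤ t → q * t < Ψ t → ψ t = 0) :
    ∀ t : ℕ, T ≤ t → Ψ T / q ≤ (t : ℝ) → Ψ t ≤ q * t + 1 := by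
  have hstep : ∀ t : ℕ, Ψ (t + 1) = Ψ t + ψ t := by
    intro t
    rw [hΨ, hΨ, Finset.sum_range_succ]
  have key : ∀ t : ℕ, T ≤ t → Ψ t ≤ max (Ψ T) (q * t + 1) := by
    intro t ht
    induction t, ht using Nat.le_induction with
    | base => exact le_max_left _ _
    | succ n hn ih =>
      by_cases h : q * n < Ψ n
      · have h0 := hself n hn h
        rw [hstep, h0, add_zero]
        refine ih.trans (max_le_max le_rfl ?_)
        have : (n : ℝ) ≤ (n + 1 : ℕ) := by push_cast; linarith
        nlinarith
      · push_neg at h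
        rw [hstep]
        have := (hψ n).2
        have : Ψ n + ψ n ≤ q * n + 1 := by linarith
        refine le_max_of_le_right (this.trans ?_)
        push_cast
        nlinarith
  intro t ht hle
  have hT : Ψ T ≤ q * t := by
    rw [div_le_iff₀ hq] at hle
    linarith [mul_comm q (t : ℝ)]
  have := key t ht
  rcases max_cases (Ψ T) (q * t + 1) with ⟨he, _⟩ | ⟨he, _⟩ <;> rw [he] at this <;> linarith
end
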